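/- arXiv:1510.05485 — 10 statements merged into one kernel-verified Lean document; each statement's English description precedes it below -/
import Mathlib

section
/- Every finite lattice is isomorphic (as a lattice) to the lattice of flats of some finite simplicial complex. -/
universe u v

/-- `F ⊆ V` is a flat of the simplicial complex `(V, H)`: for every `I ∈ H` with
`I ⊆ F` and every `p ∈ V \ F`, `I ∪ {p} ∈ H`. -/
def IsCFlat {α : Type u} (V : Set α) (H : Set (Set α)) (F : Set α) : Prop :=
  F ⊆ V ∧ ∀ I ∈ H, I ⊆ F → ∀ p ∈ V \ F, insert p I ∈ H

/-- `(V, H)` is a finite simplicial complex: `V` is finite and nonempty, and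
`H ⊆ 2^V` is nonempty and closed under taking subsets. -/
def IsCpx {α : Type u} (V : Set α) (H : Set (Set α)) : Prop :=
  V.Finite ∧ V.Nonempty ∧ H.Nonempty ∧ (∀ X ∈ H, X ⊆ V) ∧ ∀ X ∈ H, ∀ Y ⊆ X, Y ∈ H

/-- `X` is a transversal of the successive differences for some chain
`F 0 ⊂ F 1 ⊂ … ⊂ F k` of flats of `(V, H)`: `X` admits an enumeration
`x 0, …, x (k-1)` with `x i ∈ F (i+1) \ F i`. -/
def TransvSD {α : Type u} (V : Set α) (H : Set (Set α)) (X : Set α) : Prop :=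
  ∃ (k : ℕ) (F : Fin (k + 1) → Set α) (x : Fin k → α),
    (∀ i, IsCFlat V H (F i)) ∧ StrictMono F ∧
    Function.Injective x ∧ X = Set.range x ∧
    ∀ i : Fin k, x i ∈ F i.succ \ F i.castSucc

/-- `(V, H)` is boolean representable: every `X ∈ H` is a transversal of the
successive differences for some chain of flats of `(V, H)`. -/
def BoolRep {α : Type u} (V : Set α) (H : Set (Set α)) : Prop :=
  ∀ X ∈ H, TransvSD V H X

/-!
Realise `L` on three copies `L × Fin 3` of itself. A face is a set of points whose first
coordinates can be listed so that none lies below the join of the earlier ones, possibly preceded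
by a doubled head `{(w, 0), (w, 1)}` with `w ≠ ⊥`, after which the list must also avoid `Iic w`.
As for matroids, every `{p | p.1 ≤ a}` is a flat. Conversely let `F` be a flat. A face `{(x, i)}`
extends by another copy `(x, j)` only if `{i, j} = {0, 1}`, so with three copies `F` is a union of
whole fibres. A maximal independent subset of `F` already has join `a = ⨆ F`, so it cannot be
extended by `(a, 0)`, which therefore lies in `F`. Finally the doubled head `{(a, 0), (a, 1)} ⊆ F`
cannot be extended by any point over `Iic a`, so `F = {p | p.1 ≤ a}`.
-/

open Set

section IndepOver

variable {ι L : Type*} [CompleteLattice L] {π : ι → L} {b : L} {X Y : Set ι} {p : ι}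

/-- Equivalently, `X` can be enumerated as `x₁, x₂, …` with
`¬ π xₖ ≤ b ⊔ π x₁ ⊔ ⋯ ⊔ π xₖ₋₁` for every `k` (take `p` to be the last element of `T`). -/
def IndepOver (π : ι → L) (b : L) (X : Set ι) : Prop :=
  ∀ T ⊆ X, T.Nonempty → ∃ p ∈ T, ¬ π p ≤ b ⊔ ⨆ q ∈ T \ {p}, π q

theorem indepOver_empty : IndepOver π b ∅ := fun _ hT hne =>
  absurd (subset_empty_iff.1 hT) hne.ne_empty

theorem IndepOver.mono (h : IndepOver π b X) (hYX : Y ⊆ X) : IndepOver π b Y :=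
  fun T hT => h T (hT.trans hYX)

theorem IndepOver.not_le (h : IndepOver π b X) (hp : p ∈ X) : ¬ π p ≤ b := by
  obtain ⟨q, rfl, hq⟩ := h {p} (singleton_subset_iff.2 hp) (singleton_nonempty p)
  exact fun h' => hq (le_sup_of_le_left h')

theorem IndepOver.injOn (h : IndepOver π b X) : InjOn π X := by
  intro p hp q hq hpq
  by_contra hne
  obtain ⟨r, hr, hle⟩ :=
    h {p, q} (insert_subset hp (singleton_subset_iff.2 hq)) (insert_nonempty _ _)
  apply hle
  rcases hr with rfl | rfl
  · exact le_sup_of_le_right (hpq ▸ le_biSup π ⟨Or.inr rfl, Ne.symm hne⟩)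
  · exact le_sup_of_le_right (hpq ▸ le_biSup π ⟨Or.inl rfl, hne⟩)

theorem IndepOver.insert_of_not_le_iSup (h : IndepOver π b X) (hp : ¬ π p ≤ b ⊔ ⨆ q ∈ X, π q) :
    IndepOver π b (insert p X) := by
  intro T hT hne
  by_cases hpT : p ∈ T
  · refine ⟨p, hpT, fun h' => hp (h'.trans (sup_le_sup_left (biSup_mono fun q hq => ?_) _))⟩
    exact (hT hq.1).resolve_left hq.2
  · exact h T (fun q hq => (hT hq).resolve_left (ne_of_mem_of_not_mem hq hpT)) hne

theorem IndepOver.insert_of_sup_base (h : IndepOver π (b ⊔ π p) X) (hp : ¬ π p ≤ b) :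
    IndepOver π b (insert p X) := by
  intro T hT hne
  by_cases hT' : (T \ {p}).Nonempty
  · obtain ⟨r, ⟨hrT, hrp⟩, hr⟩ := h (T \ {p}) (fun q hq => (hT hq.1).resolve_left hq.2) hT'
    refine ⟨r, hrT, fun h' => hr (h'.trans (sup_le (le_sup_left.trans le_sup_left)
      (iSup₂_le fun q hq => ?_)))⟩
    by_cases hqp : q = p
    · exact hqp ▸ le_sup_of_le_left le_sup_right
    · exact le_sup_of_le_right (le_biSup π ⟨⟨hq.1, hqp⟩, hq.2⟩)
  · obtain rfl : T = {p} :=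
      hne.subset_singleton_iff.1 (sdiff_eq_empty.1 (not_nonempty_iff_eq_empty.1 hT'))
    exact ⟨p, rfl, by simpa using hp⟩

theorem IndepOver.not_le_of_insert (h : IndepOver π b (insert p X)) (hpX : p ∉ X)
    (hX : ∀ q ∈ X, π q ≤ π p) : ¬ π p ≤ b ⊔ ⨆ q ∈ X, π q := by
  obtain ⟨r, hr, hle⟩ := h (insert p X) Subset.rfl (insert_nonempty _ _)
  rcases hr with rfl | hr
  · simpa [insert_sdiff_self_of_notMem hpX] using hle
  · have hrp : r ≠ p := ne_of_mem_of_not_mem hr hpX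
    exact absurd ((hX r hr).trans (le_sup_of_le_right
      (le_biSup π (s := insert p X \ {r}) ⟨mem_insert p X, hrp.symm⟩))) hle

theorem exists_indepOver_subset {F : Set ι} (hF : F.Finite) :
    ∃ I ⊆ F, IndepOver π b I ∧ ∀ q ∈ F, π q ≤ b ⊔ ⨆ p ∈ I, π p := by
  obtain ⟨I, ⟨hIF, hI⟩, hmax⟩ := (hF.finite_subsets.subset fun I hI => hI.1 :
    {I | I ⊆ F ∧ IndepOver π b I}.Finite).exists_maximal ⟨∅, empty_subset _, indepOver_empty⟩
  refine ⟨I, hIF, hI, fun q hq => ?_⟩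
  by_contra hqI
  have hqI' := hmax ⟨insert_subset hq hIF, hI.insert_of_not_le_iSup hqI⟩ (subset_insert q I)
  exact hqI (le_sup_of_le_right (le_biSup π (hqI' (mem_insert q I))))

end IndepOver

section LatticeFaces

variable {L : Type*} [CompleteLattice L] {X Y F : Set (L × Fin 3)} {w : L}

def headPair (w : L) : Set (L × Fin 3) := {(w, 0), (w, 1)}

omit [CompleteLattice L] in
theorem mem_headPair {p : L × Fin 3} : p ∈ headPair w ↔ p = (w, 0) ∨ p = (w, 1) := Iff.rfl

def latticeFaces : Set (Set (L × Fin 3)) :=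
  {X | IndepOver Prod.fst ⊥ X} ∪
    {X | ∃ w ≠ ⊥, headPair w ⊆ X ∧ IndepOver Prod.fst w (X \ headPair w)}

theorem empty_mem_latticeFaces : (∅ : Set (L × Fin 3)) ∈ latticeFaces := Or.inl indepOver_empty

theorem singleton_mem_latticeFaces {p : L × Fin 3} (hp : p.1 ≠ ⊥) : {p} ∈ latticeFaces :=
  have h := (indepOver_empty (π := Prod.fst) (b := ⊥)).insert_of_not_le_iSup (p := p)
    (by simpa using hp)
  Or.inl (by simpa using h)

theorem doubled_mem_faces (hw : w ≠ ⊥) : headPair w ∈ latticeFaces :=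
  Or.inr ⟨w, hw, Subset.rfl, by simpa using indepOver_empty⟩

theorem mem_latticeFaces_of_subset (hX : X ∈ latticeFaces) (hYX : Y ⊆ X) : Y ∈ latticeFaces := by
  rcases hX with hX | ⟨w, hw, hwX, hX⟩
  · exact Or.inl (hX.mono hYX)
  by_cases hwY : headPair w ⊆ Y
  · exact Or.inr ⟨w, hw, hwY, hX.mono (sdiff_subset_sdiff_left hYX)⟩
  obtain ⟨k, hk⟩ : ∃ k, Y ⊆ insert (w, k) (X \ headPair w) := by
    obtain ⟨d, hd, hdY⟩ := not_subset.1 hwY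
    rcases mem_headPair.1 hd with rfl | rfl
    · refine ⟨1, fun y hy => ?_⟩
      grind [mem_headPair]
    · refine ⟨0, fun y hy => ?_⟩
      grind [mem_headPair]
  refine Or.inl ((IndepOver.insert_of_sup_base ?_ ?_).mono hk)
  · simpa using hX
  · simpa using hw

theorem mem_headPair_of_mem_latticeFaces (hX : X ∈ latticeFaces) {p q r : L × Fin 3}
    (hp : p ∈ X) (hq : q ∈ X) (hpq : p ≠ q) (hfst : p.1 = q.1) (hr : r ∈ X) (hrp : r.1 ≤ p.1) :
    r ∈ headPair p.1 := by
  rcases hX with hX | ⟨w, -, -, hX⟩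
  · exact absurd (hX.injOn hp hq hfst) hpq
  have hw : p.1 = w := by
    by_contra hne
    have hp' : p ∉ headPair w := by rintro (rfl | rfl) <;> exact hne rfl
    have hq' : q ∉ headPair w := by rintro (rfl | rfl) <;> exact hne hfst
    exact hpq (hX.injOn ⟨hp, hp'⟩ ⟨hq, hq'⟩ hfst)
  rw [hw] at hrp ⊢
  by_contra hr'
  exact hX.not_le ⟨hr, hr'⟩ hrp

theorem isCFlat_fst_preimage_Iic (a : L) : IsCFlat univ latticeFaces (Prod.fst ⁻¹' Iic a) := by
  refine ⟨subset_univ _, fun I hI hIa p ⟨_, hpa⟩ => ?_⟩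
  have hsup {b : L} {J : Set (L × Fin 3)} (hb : b ≤ a) (hJ : J ⊆ I) :
      ¬ p.1 ≤ b ⊔ ⨆ q ∈ J, q.1 :=
    fun h => hpa (h.trans (sup_le hb (iSup₂_le fun q hq => hIa (hJ hq))))
  rcases hI with hI | ⟨w, hw, hwI, hI⟩
  · exact Or.inl (hI.insert_of_not_le_iSup (hsup bot_le Subset.rfl))
  have hwa : w ≤ a := hIa (hwI (Or.inl rfl))
  have hpw : p ∉ headPair w := by rintro (rfl | rfl) <;> exact hpa hwa
  refine Or.inr ⟨w, hw, hwI.trans (subset_insert _ _), ?_⟩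
  rw [insert_sdiff_of_notMem _ hpw]
  exact hI.insert_of_not_le_iSup (hsup hwa sdiff_subset)

end LatticeFaces

section Flats

variable {L : Type*} [CompleteLattice L] {F : Set (L × Fin 3)}

theorem IsCFlat.bot_mem (hF : IsCFlat univ latticeFaces F) (j : Fin 3) : ((⊥ : L), j) ∈ F := by
  by_contra h
  rcases hF.2 ∅ empty_mem_latticeFaces (empty_subset F) (⊥, j) ⟨trivial, h⟩ with h' | ⟨w, -, hw, -⟩
  · exact h'.not_le (mem_insert _ _) le_rfl
  · have h0 := hw (Or.inl rfl)
    have h1 := hw (Or.inr rfl)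
    simp only [insert_empty_eq, mem_singleton_iff, Prod.mk.injEq] at h0 h1
    exact absurd (h0.2.trans h1.2.symm) (by decide)

theorem IsCFlat.mem_of_fst_eq (hF : IsCFlat univ latticeFaces F) {x : L} {i : Fin 3}
    (hi : (x, i) ∈ F) (j : Fin 3) : (x, j) ∈ F := by
  rcases eq_or_ne x ⊥ with rfl | hx
  · exact hF.bot_mem j
  have key {i j : Fin 3} (hi : (x, i) ∈ F) (hj : (x, j) ∉ F) : i ≠ 2 ∧ j ≠ 2 := by
    have hX :=
      hF.2 _ (singleton_mem_latticeFaces hx) (singleton_subset_iff.2 hi) (x, j) ⟨trivial, hj⟩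
    have hne : ((x, j) : L × Fin 3) ≠ (x, i) := fun h => hj (h ▸ hi)
    have hj' := mem_headPair_of_mem_latticeFaces hX (mem_insert _ _) (mem_insert_of_mem _ rfl)
      hne rfl (mem_insert _ _) le_rfl
    have hi' := mem_headPair_of_mem_latticeFaces hX (mem_insert _ _) (mem_insert_of_mem _ rfl)
      hne rfl (mem_insert_of_mem _ rfl) le_rfl
    simp only [mem_headPair, Prod.mk.injEq, true_and] at hi' hj'
    omega
  by_contra hj
  by_cases h2 : ((x, 2) : L × Fin 3) ∈ F
  · exact (key h2 hj).1 rfl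
  · exact (key hi h2).2 rfl

theorem IsCFlat.exists_fst_eq_iSup (hF : IsCFlat univ latticeFaces F) (hfin : F.Finite) :
    ∃ p ∈ F, p.1 = ⨆ q ∈ F, q.1 := by
  set a := ⨆ q ∈ F, q.1
  by_contra! h
  obtain ⟨I, hIF, hI, hspan⟩ := exists_indepOver_subset (π := Prod.fst) (b := ⊥) hfin
  have haI : a ≤ ⨆ p ∈ I, p.1 := iSup₂_le fun q hq => by simpa using hspan q hq
  have ha0 : ((a, 0) : L × Fin 3) ∉ F := fun h' => h _ h' rfl
  rcases hF.2 I (Or.inl hI) hIF (a, 0) ⟨trivial, ha0⟩ with hI' | ⟨w, -, hw, -⟩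
  · exact hI'.not_le_of_insert (fun h' => ha0 (hIF h'))
      (fun q hq => le_biSup Prod.fst (hIF hq)) (le_sup_of_le_right haI)
  have hw1 : ((w, 1) : L × Fin 3) ∈ I := (hw (Or.inr rfl)).resolve_left (by simp)
  rcases hw (Or.inl rfl) with hw0 | hw0
  · simp only [Prod.mk.injEq] at hw0
    exact h _ (hIF hw1) hw0.1
  · exact absurd (hI.injOn hw0 hw1 rfl) (by simp)

theorem IsCFlat.eq_fst_preimage_Iic (hF : IsCFlat univ latticeFaces F) (hfin : F.Finite) :
    F = Prod.fst ⁻¹' Iic (⨆ q ∈ F, q.1) := by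
  obtain ⟨⟨a, i⟩, haF, ha⟩ := hF.exists_fst_eq_iSup hfin
  dsimp only at ha
  rw [← ha]
  refine subset_antisymm (fun p hp => ha ▸ le_biSup Prod.fst hp) ?_
  rintro ⟨y, k⟩ (hy : y ≤ a)
  suffices ((y, 0) : L × Fin 3) ∈ F from hF.mem_of_fst_eq this k
  rcases eq_or_ne a ⊥ with rfl | ha
  · obtain rfl := le_bot_iff.1 hy
    exact hF.bot_mem 0
  have hD : headPair a ⊆ F := by
    rintro q (rfl | rfl) <;> exact hF.mem_of_fst_eq haF _
  by_contra hy0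
  exact hy0 (hD (mem_headPair_of_mem_latticeFaces
    (hF.2 _ (doubled_mem_faces ha) hD (y, 0) ⟨trivial, hy0⟩) (p := (a, 0)) (q := (a, 1))
    (mem_insert_of_mem _ (Or.inl rfl)) (mem_insert_of_mem _ (Or.inr rfl)) (by simp) rfl
    (mem_insert _ _) hy))

variable [Finite L]

theorem isCpx_latticeFaces : IsCpx (univ : Set (L × Fin 3)) latticeFaces :=
  ⟨finite_univ, univ_nonempty, ⟨∅, empty_mem_latticeFaces⟩, fun X _ => subset_univ X,
    fun _ hX _ hYX => mem_latticeFaces_of_subset hX hYX⟩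

noncomputable def flatsOrderIso : L ≃o {F : Set (L × Fin 3) // IsCFlat univ latticeFaces F} :=
  OrderIso.ofSurjective
    (OrderEmbedding.ofMapLEIff (fun a => ⟨Prod.fst ⁻¹' Iic a, isCFlat_fst_preimage_Iic a⟩)
      fun a b => by
        rw [Subtype.mk_le_mk, Prod.fst_surjective.preimage_subset_preimage_iff,
          Iic_subset_Iic])
    fun F => ⟨_, Subtype.ext (F.2.eq_fst_preimage_Iic (toFinite _)).symm⟩

end Flats

/-- Every finite lattice is isomorphic to the lattice of flats of some
finite simplicial complex. -/
theorem stmt0 (L : Type u) [Lattice L] [Fintype L] [Nonempty L] :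
    ∃ (α : Type u) (V : Set α) (H : Set (Set α)), IsCpx V H ∧
      Nonempty (L ≃o {F : Set α // IsCFlat V H F}) := by
  let _ := Fintype.toCompleteLatticeOfNonempty L
  exact ⟨L × Fin 3, univ, latticeFaces, isCpx_latticeFaces, ⟨flatsOrderIso⟩⟩
end

section
/- Let (V, H) be a finite simplicial complex and suppose X ⊆ V is a transversal of the successive differences for a chain F_0 ⊂ F_1 ⊂ … ⊂ F_k of flats of (V, H), via an enumeration x_1, …, x_k of X with x_i ∈ F_i \ F_{i−1} for each i. Then {x_1, …, x_i} ∈ H for every i = 0, …, k; in particular X ∈ H. -/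
universe u v

/-! Induction along the chain: `{x 0, …, x (i-1)} ⊆ F i` is a face and `x i ∈ V \ F i`,
so the flat property of `F i` lets us adjoin `x i`. -/

theorem IsCpx.empty_mem {α : Type u} {V : Set α} {H : Set (Set α)} (hC : IsCpx V H) :
    ∅ ∈ H :=
  let ⟨_, _, ⟨Y, hY⟩, _, hdown⟩ := hC
  hdown Y hY ∅ (Set.empty_subset Y)

section Transversal

variable {α : Type u} {V : Set α} {H : Set (Set α)} {k : ℕ} {F : Fin (k + 1) → Set α}
  {x : Fin k → α}

theorem image_lt_succ_mem (hflat : ∀ i, IsCFlat V H (F i)) (hmono : Monotone F)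
    (hx : ∀ i : Fin k, x i ∈ F i.succ \ F i.castSucc) {i : ℕ} (hik : i < k)
    (hprev : x '' {j : Fin k | (j : ℕ) < i} ∈ H) :
    x '' {j : Fin k | (j : ℕ) < i + 1} ∈ H := by
  let xi : Fin k := ⟨i, hik⟩
  have hsegment : {j : Fin k | (j : ℕ) < i + 1} = insert xi {j : Fin k | (j : ℕ) < i} := by
    ext j
    simp only [Set.mem_ofPred_eq, Set.mem_insert_iff, Fin.ext_iff, xi]
    omega
  have hprev_sub : x '' {j : Fin k | (j : ℕ) < i} ⊆ F xi.castSucc := by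
    rintro _ ⟨j, hj, rfl⟩
    exact hmono (Fin.le_def.mpr (Nat.succ_le_of_lt hj)) (hx j).1
  rw [hsegment, Set.image_insert_eq]
  exact (hflat xi.castSucc).2 _ hprev hprev_sub _ ⟨(hflat xi.succ).1 (hx xi).1, (hx xi).2⟩

theorem image_lt_mem_of_transversal (hempty : ∅ ∈ H) (hflat : ∀ i, IsCFlat V H (F i))
    (hmono : Monotone F) (hx : ∀ i : Fin k, x i ∈ F i.succ \ F i.castSucc) :
    ∀ i : ℕ, i ≤ k → x '' {j : Fin k | (j : ℕ) < i} ∈ H := by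
  intro i
  induction i with
  | zero => simpa using hempty
  | succ i ih =>
    exact fun hik => image_lt_succ_mem hflat hmono hx hik (ih (Nat.le_of_succ_le hik))

end Transversal

theorem stmt1_general {α : Type u} (V : Set α) (H : Set (Set α)) (hC : IsCpx V H)
    (k : ℕ) (F : Fin (k + 1) → Set α) (x : Fin k → α)
    (hflat : ∀ i, IsCFlat V H (F i)) (hchain : StrictMono F)
    (X : Set α) (hX : X = Set.range x)
    (hx : ∀ i : Fin k, x i ∈ F i.succ \ F i.castSucc) :
    (∀ i : ℕ, i ≤ k → x '' {j : Fin k | (j : ℕ) < i} ∈ H) ∧ X ∈ H := by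
  have hprefix := image_lt_mem_of_transversal hC.empty_mem hflat hchain.monotone hx
  refine ⟨hprefix, ?_⟩
  have hall : {j : Fin k | (j : ℕ) < k} = Set.univ := Set.eq_univ_of_forall Fin.isLt
  simpa only [hX, hall, Set.image_univ] using hprefix k le_rfl

/-- If `X` is a transversal of the successive differences for a chain
`F 0 ⊂ F 1 ⊂ … ⊂ F k` of flats of a finite simplicial complex `(V, H)`,
via an enumeration `x 0, …, x (k-1)` of `X` with `x i ∈ F (i+1) \ F i`, then
each initial segment `{x 0, …, x (i-1)}` belongs to `H`; in particular `X ∈ H`. -/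
theorem stmt1 {α : Type u} (V : Set α) (H : Set (Set α)) (hC : IsCpx V H)
    (k : ℕ) (F : Fin (k + 1) → Set α) (x : Fin k → α)
    (hflat : ∀ i, IsCFlat V H (F i)) (hchain : StrictMono F)
    (hinj : Function.Injective x) (X : Set α) (hX : X = Set.range x)
    (hx : ∀ i : Fin k, x i ∈ F i.succ \ F i.castSucc) :
    (∀ i : ℕ, i ≤ k → x '' {j : Fin k | (j : ℕ) < i} ∈ H) ∧ X ∈ H :=
  stmt1_general V H hC k F x hflat hchain X hX hx
end

section
/- Let (V, H) be a boolean representable finite simplicial complex such that {p} ∈ H for every p ∈ V. Then V is the union of the atoms of the lattice of flats Fl(V,H); that is, every p ∈ V belongs to some minimal nonempty element of Fl(V,H) covering its bottom element. -/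
universe u v

/-- The bottom element of the lattice of flats: the intersection of all flats. -/
def botFlat {α : Type u} (V : Set α) (H : Set (Set α)) : Set α :=
  ⋂₀ {F | IsCFlat V H F}

/-- An atom of the lattice of flats: a flat covering the bottom flat. -/
def IsAtomFlat {α : Type u} (V : Set α) (H : Set (Set α)) (A : Set α) : Prop :=
  IsCFlat V H A ∧ botFlat V H ⊂ A ∧
    ∀ G, IsCFlat V H G → botFlat V H ⊂ G → G ⊂ A → False

/-- The closure of a set: the intersection of all flats containing it. -/
def clF {α : Type u} (V : Set α) (H : Set (Set α)) (S : Set α) : Set α :=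
  ⋂₀ {F | IsCFlat V H F ∧ S ⊆ F}

lemma isCFlat_univV {α : Type u} (V : Set α) (H : Set (Set α)) : IsCFlat V H V :=
  ⟨subset_rfl, fun _ _ _ q hq => absurd hq.1 hq.2⟩

lemma subset_clF {α : Type u} (V : Set α) (H : Set (Set α)) (S : Set α) :
    S ⊆ clF V H S := fun _ hx _ hF => hF.2 hx

lemma clF_le {α : Type u} {V : Set α} {H : Set (Set α)} {S F : Set α}
    (hF : IsCFlat V H F) (hSF : S ⊆ F) : clF V H S ⊆ F :=
  Set.sInter_subset_of_mem ⟨hF, hSF⟩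

lemma clF_flat {α : Type u} {V : Set α} {H : Set (Set α)} {S : Set α}
    (hSV : S ⊆ V) : IsCFlat V H (clF V H S) := by
  constructor
  · exact clF_le (isCFlat_univV V H) hSV
  · intro I hI hIc q hq
    have : ¬ ∀ F ∈ {F | IsCFlat V H F ∧ S ⊆ F}, q ∈ F := by
      intro h; exact hq.2 (fun F hF => h F hF)
    push_neg at this
    obtain ⟨F, hF, hqF⟩ := this
    exact hF.1.2 I hI (hIc.trans (Set.sInter_subset_of_mem hF)) q ⟨hq.1, hqF⟩

/-- If `(V, H)` is a boolean representable finite simplicial complex with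
`{p} ∈ H` for all `p ∈ V`, then `V` is the union of the atoms of its lattice of
flats: every `p ∈ V` lies in some atom of `Fl(V, H)`. -/
theorem stmt4 {α : Type u} (V : Set α) (H : Set (Set α)) (hC : IsCpx V H)
    (hbr : BoolRep V H) (hsing : ∀ p ∈ V, ({p} : Set α) ∈ H) :
    ∀ p ∈ V, ∃ A, IsAtomFlat V H A ∧ p ∈ A := by
  intro p hp
  obtain ⟨_, _, ⟨X0, hX0⟩, _, hdown⟩ := hC
  have hempty : (∅ : Set α) ∈ H := hdown X0 hX0 ∅ (Set.empty_subset X0)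
  have hemptyflat : IsCFlat V H (∅ : Set α) := by
    refine ⟨Set.empty_subset V, fun I hI hIe q hq => ?_⟩
    have : I = ∅ := Set.subset_empty_iff.mp hIe
    rw [this]
    simpa using hsing q hq.1
  have hbot : botFlat V H = ∅ :=
    Set.Subset.antisymm (Set.sInter_subset_of_mem hemptyflat) (Set.empty_subset _)
  set A := clF V H {p} with hA
  have hAflat : IsCFlat V H A := clF_flat (Set.singleton_subset_iff.mpr hp)
  have hpA : p ∈ A := subset_clF V H {p} rfl
  -- the set of points "equivalent" to p
  set P : Set α := {x | x ∈ A ∧ p ∈ clF V H {x}} with hP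
  have hPA : P ⊆ A := fun x hx => hx.1
  have hPV : P ⊆ V := fun x hx => hAflat.1 (hPA hx)
  -- key: any member of H contained in P is a subsingleton (uses boolean representability)
  have key : ∀ I ∈ H, I ⊆ P → I.Subsingleton := by
    intro I hI hIP a ha b hb
    by_contra hab
    obtain ⟨k, F, x, hfl, hmono, hinj, hrange, hmem⟩ := hbr I hI
    rw [hrange] at ha hb
    obtain ⟨i, rfl⟩ := ha
    obtain ⟨j, rfl⟩ := hb
    have hij : i ≠ j := fun h => hab (by rw [h])
    -- symmetric argument: for i < j get a contradiction
    have main : ∀ i j : Fin k, i < j → x i ∈ P → x j ∈ P → False := by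
      intro i j hlt hxi hxj
      have hle : Fin.succ i ≤ Fin.castSucc j := by
        rw [Fin.le_def]
        simp only [Fin.val_succ, Fin.coe_castSucc]
        exact hlt
      have hxiF : x i ∈ F (Fin.castSucc j) := hmono.monotone hle (hmem i).1
      have hpF : p ∈ F (Fin.castSucc j) :=
        clF_le (hfl _) (Set.singleton_subset_iff.mpr hxiF) hxi.2
      have hxjF : x j ∈ F (Fin.castSucc j) :=
        clF_le (hfl _) (Set.singleton_subset_iff.mpr hpF) hxj.1
      exact (hmem j).2 hxjF
    rcases lt_trichotomy i j with h | h | h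
    · exact main i j h (hIP (hrange ▸ Set.mem_range_self i)) (hIP (hrange ▸ Set.mem_range_self j))
    · exact hij h
    · exact main j i h (hIP (hrange ▸ Set.mem_range_self j)) (hIP (hrange ▸ Set.mem_range_self i))
  -- P is a flat
  have hPflat : IsCFlat V H P := by
    refine ⟨hPV, fun I hI hIP s hs => ?_⟩
    rcases I.eq_empty_or_nonempty with hIe | ⟨y, hy⟩
    · rw [hIe]
      simpa using hsing s hs.1
    · have hIy : I = {y} := (key I hI hIP).eq_singleton_of_mem hy
      subst hIy
      have hyP : y ∈ P := hIP rfl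
      by_cases hsA : s ∈ A
      · -- s ∈ A \ P, so p ∉ cl{s}; and y ∉ cl{s}
        have hps : p ∉ clF V H {s} := fun h => hs.2 ⟨hsA, h⟩
        have hys : y ∉ clF V H {s} := by
          intro h
          exact hps (clF_le (clF_flat (Set.singleton_subset_iff.mpr hs.1))
            (Set.singleton_subset_iff.mpr h) hyP.2)
        have : insert y {s} ∈ H :=
          (clF_flat (Set.singleton_subset_iff.mpr hs.1)).2 {s} (hsing s hs.1)
            (subset_clF V H {s}) y ⟨hPV hyP, hys⟩
        rwa [Set.pair_comm] at this
      · exact hAflat.2 {y} hI (Set.singleton_subset_iff.mpr (hPA hyP)) s ⟨hs.1, hsA⟩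
  have hAP : A ⊆ P :=
    clF_le hPflat (Set.singleton_subset_iff.mpr ⟨hpA, subset_clF V H {p} rfl⟩)
  refine ⟨A, ⟨hAflat, ?_, ?_⟩, hpA⟩
  · rw [hbot]
    exact (Set.empty_subset A).ssubset_of_ne (fun h => (h ▸ hpA : p ∈ (∅ : Set α)))
  · intro G hG hbG hGA
    rw [hbot] at hbG
    obtain ⟨q, hq⟩ := Set.nonempty_of_ssubset hbG
    have hqP : q ∈ P := hAP (hGA.1 hq.1)
    have hpG : p ∈ G := clF_le hG (Set.singleton_subset_iff.mpr hq.1) hqP.2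
    have : A ⊆ G := clF_le hG (Set.singleton_subset_iff.mpr hpG)
    exact hGA.2 this
end

section
/- Let (V, H) be a boolean representable finite simplicial complex. Then the lattice of flats Fl(V,H) is atomistic: every flat is a join of atoms of Fl(V,H). -/
universe u v

/-- The closure of `X`: the intersection of all flats containing `X`; the join
of a family of flats in `Fl(V, H)` is the closure of its union. -/
def clOf {α : Type u} (V : Set α) (H : Set (Set α)) (X : Set α) : Set α :=
  ⋂₀ {G | IsCFlat V H G ∧ X ⊆ G}

section Aux

variable {α : Type u} {V : Set α} {H : Set (Set α)}

lemma flat_V : IsCFlat V H V :=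
  ⟨subset_rfl, fun _ _ _ _ hp => (hp.2 hp.1).elim⟩

lemma bot_subset {G : Set α} (hG : IsCFlat V H G) : botFlat V H ⊆ G :=
  Set.sInter_subset_of_mem hG

lemma subset_clOf {X : Set α} : X ⊆ clOf V H X :=
  fun _ ha => Set.mem_sInter.2 fun _ hG => hG.2 ha

lemma clOf_subset {X G : Set α} (hG : IsCFlat V H G) (h : X ⊆ G) : clOf V H X ⊆ G :=
  Set.sInter_subset_of_mem ⟨hG, h⟩

lemma clOf_mono {X Y : Set α} (h : X ⊆ Y) : clOf V H X ⊆ clOf V H Y :=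
  fun _ ha => Set.mem_sInter.2 fun G hG => Set.mem_sInter.1 ha G ⟨hG.1, h.trans hG.2⟩

lemma flat_sInter {𝒢 : Set (Set α)} (hne : 𝒢.Nonempty) (h : ∀ G ∈ 𝒢, IsCFlat V H G) :
    IsCFlat V H (⋂₀ 𝒢) := by
  obtain ⟨G₀, hG₀⟩ := hne
  refine ⟨(Set.sInter_subset_of_mem hG₀).trans (h G₀ hG₀).1, ?_⟩
  intro I hI hIsub p hp
  obtain ⟨G, hG, hpG⟩ : ∃ G ∈ 𝒢, p ∉ G := by
    by_contra hc
    push_neg at hc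
    exact hp.2 (Set.mem_sInter.2 hc)
  exact (h G hG).2 I hI (hIsub.trans (Set.sInter_subset_of_mem hG)) p ⟨hp.1, hpG⟩

lemma clOf_flat {X : Set α} (hX : X ⊆ V) : IsCFlat V H (clOf V H X) :=
  flat_sInter ⟨V, ⟨flat_V, hX⟩⟩ fun _ hG => hG.1

lemma mem_H_not_bot (hbr : BoolRep V H) {I : Set α} {b : α} (hI : I ∈ H) (hb : b ∈ I) :
    b ∉ botFlat V H := by
  obtain ⟨k, F, x, hflat, _, _, hrange, hmem⟩ := hbr I hI
  rw [hrange] at hb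
  obtain ⟨i, rfl⟩ := hb
  exact fun h => (hmem i).2 (bot_subset (hflat i.castSucc) h)

lemma pair_not_cl (hbr : BoolRep V H) {I : Set α} {a b : α}
    (hI : I ∈ H) (ha : a ∈ I) (hb : b ∈ I) (hab : a ≠ b)
    (h1 : b ∈ clOf V H {a}) (h2 : a ∈ clOf V H {b}) : False := by
  obtain ⟨k, F, x, hflat, hmono, _, hrange, hmem⟩ := hbr I hI
  rw [hrange] at ha hb
  obtain ⟨i, rfl⟩ := ha
  obtain ⟨j, rfl⟩ := hb
  have hij : i ≠ j := fun h => hab (by rw [h])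
  rcases hij.lt_or_gt with h | h
  · have hle : i.succ ≤ j.castSucc := by
      rw [Fin.le_def, Fin.val_succ, Fin.coe_castSucc]
      exact h
    have hxi : x i ∈ F j.castSucc := hmono.monotone hle (hmem i).1
    exact (hmem j).2 (clOf_subset (hflat _) (Set.singleton_subset_iff.2 hxi) h1)
  · have hle : j.succ ≤ i.castSucc := by
      rw [Fin.le_def, Fin.val_succ, Fin.coe_castSucc]
      exact h
    have hxj : x j ∈ F i.castSucc := hmono.monotone hle (hmem j).1
    exact (hmem i).2 (clOf_subset (hflat _) (Set.singleton_subset_iff.2 hxj) h2)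

lemma singleton_mem (hC : IsCpx V H) {p : α} (hpV : p ∈ V) (hpB : p ∉ botFlat V H) :
    {p} ∈ H := by
  obtain ⟨Ω, hΩ, hpΩ⟩ : ∃ Ω, IsCFlat V H Ω ∧ p ∉ Ω := by
    by_contra hc
    push_neg at hc
    exact hpB (Set.mem_sInter.2 fun Ω hΩ => hc Ω hΩ)
  obtain ⟨X₀, hX₀⟩ := hC.2.2.1
  have h0 : (∅ : Set α) ∈ H := hC.2.2.2.2 X₀ hX₀ ∅ (Set.empty_subset _)
  have := hΩ.2 ∅ h0 (Set.empty_subset _) p ⟨hpV, hpΩ⟩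
  simpa using this

end Aux

/-- The lattice of flats of a boolean representable finite simplicial complex is
atomistic: every flat is a join (in `Fl(V, H)`) of a set of atoms of `Fl(V, H)`. -/
theorem stmt5 {α : Type u} (V : Set α) (H : Set (Set α)) (hC : IsCpx V H)
    (hbr : BoolRep V H) :
    ∀ F, IsCFlat V H F →
      ∃ S : Set (Set α), (∀ A ∈ S, IsAtomFlat V H A) ∧ F = clOf V H (⋃₀ S) := by
  suffices h : ∀ n : ℕ, ∀ F : Set α, IsCFlat V H F → F.ncard ≤ n →
      ∃ S : Set (Set α), (∀ A ∈ S, IsAtomFlat V H A) ∧ F = clOf V H (⋃₀ S) by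
    exact fun F hF => h F.ncard F hF le_rfl
  intro n
  induction n using Nat.strong_induction_on with
  | _ n IH =>
  intro F hF hFn
  have hFV : F ⊆ V := hF.1
  have hFfin : F.Finite := hC.1.subset hFV
  refine ⟨{A | IsAtomFlat V H A ∧ A ⊆ F}, fun A hA => hA.1, ?_⟩
  set U : Set α := ⋃₀ {A | IsAtomFlat V H A ∧ A ⊆ F} with hUdef
  have hUF : U ⊆ F := Set.sUnion_subset fun A hA => hA.2
  have hUV : U ⊆ V := hUF.trans hFV
  set T : Set α := clOf V H U with hTdef
  have hTflat : IsCFlat V H T := clOf_flat hUV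
  have hTF : T ⊆ F := clOf_subset hF hUF
  by_contra hne
  -- every proper subflat of F is contained in T
  have hsub : ∀ G, IsCFlat V H G → G ⊆ F → G ≠ F → G ⊆ T := by
    intro G hG hGF hGne
    have hGn : G.ncard < n :=
      lt_of_lt_of_le (Set.ncard_lt_ncard (ssubset_iff_subset_ne.2 ⟨hGF, hGne⟩) hFfin) hFn
    obtain ⟨S, hS, hGeq⟩ := IH G.ncard hGn G hG le_rfl
    have hSU : ⋃₀ S ⊆ U := by
      refine Set.sUnion_subset fun A hA => Set.subset_sUnion_of_mem ?_
      have h1 : A ⊆ clOf V H (⋃₀ S) := (Set.subset_sUnion_of_mem hA).trans subset_clOf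
      rw [← hGeq] at h1
      exact ⟨hS A hA, h1.trans hGF⟩
    calc G = clOf V H (⋃₀ S) := hGeq
    _ ⊆ clOf V H U := clOf_mono hSU
  -- closure of each point of F \ T is all of F
  have hclu : ∀ u ∈ F \ T, clOf V H {u} = F := by
    intro u hu
    have huV : u ∈ V := hFV hu.1
    have hcf : IsCFlat V H (clOf V H {u}) := clOf_flat (Set.singleton_subset_iff.2 huV)
    have hcF : clOf V H {u} ⊆ F := clOf_subset hF (Set.singleton_subset_iff.2 hu.1)
    by_contra hne2
    exact hu.2 (hsub _ hcf hcF hne2 (subset_clOf rfl))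
  by_cases hTB : T = botFlat V H
  · -- then F is an atom, contradiction
    have hbotF : botFlat V H ⊆ F := bot_subset hF
    have hFatom : IsAtomFlat V H F := by
      refine ⟨hF, ssubset_iff_subset_ne.2 ⟨hbotF, ?_⟩, ?_⟩
      · intro hBF
        exact hne (hTB.trans hBF).symm
      · intro G hG hBG hGF
        have h1 : G ⊆ T := hsub G hG hGF.subset hGF.ne
        rw [hTB] at h1
        exact hBG.ne (subset_antisymm hBG.subset h1)
    have hFA : F ⊆ T :=
      (Set.subset_sUnion_of_mem ⟨hFatom, subset_rfl⟩ : F ⊆ U).trans subset_clOf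
    exact hne (subset_antisymm hFA hTF)
  · -- pick w ∈ T \ bot and show (F \ T) ∪ bot is a flat, contradiction
    have hbT : botFlat V H ⊆ T := bot_subset hTflat
    obtain ⟨w, hwT, hwB⟩ : ∃ w, w ∈ T ∧ w ∉ botFlat V H := by
      by_contra hc
      push_neg at hc
      exact hTB (subset_antisymm (fun t ht => hc t ht) hbT)
    obtain ⟨x₀, hx₀⟩ : (F \ T).Nonempty :=
      Set.diff_nonempty.2 fun h => hne (subset_antisymm h hTF)
    have hMV : (F \ T) ∪ botFlat V H ⊆ V :=
      Set.union_subset (Set.diff_subset.trans hFV) (bot_subset flat_V)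
    have hMflat : IsCFlat V H ((F \ T) ∪ botFlat V H) := by
      refine ⟨hMV, ?_⟩
      intro I hI hIM p hp
      have hIB : ∀ b ∈ I, b ∉ botFlat V H := fun b hb => mem_H_not_bot hbr hI hb
      have hIF : I ⊆ F \ T := by
        intro b hb
        rcases hIM hb with h | h
        · exact h
        · exact absurd h (hIB b hb)
      have hpV : p ∈ V := hp.1
      have hpB : p ∉ botFlat V H := fun h => hp.2 (Or.inr h)
      have hsing : I.Subsingleton := by
        intro a ha b hb
        by_contra hab
        have haF := hIF ha
        have hbF := hIF hb
        refine pair_not_cl hbr hI ha hb hab ?_ ?_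
        · rw [hclu a haF]; exact hbF.1
        · rw [hclu b hbF]; exact haF.1
      rcases hsing.eq_empty_or_singleton with hIe | ⟨u, hIu⟩
      · rw [hIe]
        simpa using singleton_mem hC hpV hpB
      · rw [hIu]
        have huI : u ∈ I := by rw [hIu]; exact rfl
        have huFT : u ∈ F \ T := hIF huI
        have huV : u ∈ V := hFV huFT.1
        have h1u : {u} ∈ H := by rw [← hIu]; exact hI
        by_cases hpF : p ∈ F
        · have hpT : p ∈ T := by
            by_contra h
            exact hp.2 (Or.inl ⟨hpF, h⟩)
          have hclp : clOf V H {p} ⊆ T := clOf_subset hTflat (Set.singleton_subset_iff.2 hpT)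
          have hpH : {p} ∈ H := singleton_mem hC hpV hpB
          have hclpflat : IsCFlat V H (clOf V H {p}) :=
            clOf_flat (Set.singleton_subset_iff.2 hpV)
          have hupair : insert u {p} ∈ H :=
            hclpflat.2 {p} hpH subset_clOf u ⟨huV, fun h => huFT.2 (hclp h)⟩
          have hcomm : insert p ({u} : Set α) = insert u ({p} : Set α) := by
            ext y; simp [or_comm]
          rw [hcomm]
          exact hupair
        · exact hF.2 {u} h1u (Set.singleton_subset_iff.2 huFT.1) p ⟨hpV, hpF⟩
    have hFM : F ⊆ (F \ T) ∪ botFlat V H := by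
      have h2 : clOf V H {x₀} ⊆ (F \ T) ∪ botFlat V H :=
        clOf_subset hMflat (Set.singleton_subset_iff.2 (Or.inl hx₀))
      rw [hclu x₀ hx₀] at h2
      exact h2
    rcases hFM (hTF hwT) with h | h
    · exact h.2 hwT
    · exact hwB h
end

section
/- The 3-element chain (the linearly ordered lattice with exactly three elements) is not isomorphic to the lattice of flats of any boolean representable finite simplicial complex, whereas every lattice with at most 2 elements is isomorphic to the lattice of flats of some boolean representable finite simplicial complex. -/
universe u v

/-!
Suppose the flats of a boolean representable complex form a chain `A ⊂ B ⊂ C`. A face is a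
transversal of a chain of flats, so it has at most two elements, and when it has two it meets
`B \ A`. Hence `A ∪ (V \ B)` contains no face with two elements, and the flat axioms for it reduce
to faces `{r}` and `{r, x}` with `r ∈ B \ A`, which are supplied by the flats `A` and `B`. So
`A ∪ (V \ B)` is a fourth flat. A lattice with at most two elements is `{⊥, ⊤}`: it is the lattice
of flats of the complex on the single vertex `⊤`, which is a loop exactly when `⊥ = ⊤`.
-/

open Set

section Flats

variable {α : Type u} {V : Set α} {H : Set (Set α)}

lemma IsCpx.empty_mem_s6 (hcpx : IsCpx V H) : ∅ ∈ H := by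
  obtain ⟨X, hX⟩ := hcpx.2.2.1
  exact hcpx.2.2.2.2 X hX ∅ (empty_subset X)

lemma TransvSD.subsingleton_or_exists_chain {X : Set α} (hX : TransvSD V H X) :
    X.Subsingleton ∨ ∃ F₀ F₁ F₂, IsCFlat V H F₀ ∧ IsCFlat V H F₁ ∧ IsCFlat V H F₂ ∧
      F₀ ⊂ F₁ ∧ F₁ ⊂ F₂ ∧ ∃ x ∈ X, x ∈ F₁ \ F₀ := by
  obtain ⟨k, F, x, hF, hmono, -, rfl, hx⟩ := hX
  match k, F, x, hF, hmono, hx with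
  | 0, _, x, _, _, _ => exact .inl (subsingleton_range x)
  | 1, _, x, _, _, _ => exact .inl (subsingleton_range x)
  | n + 2, F, x, hF, hmono, hx =>
    refine .inr ⟨F 0, F 1, F 2, hF 0, hF 1, hF 2, hmono ?_, hmono ?_, x 0, mem_range_self 0, hx 0⟩
    all_goals simp only [Fin.lt_def, Fin.val_zero, Fin.val_one, Fin.val_two]; omega

lemma isCFlat_union_diff (hcpx : IsCpx V H) {A B : Set α} (hA : IsCFlat V H A)
    (hB : IsCFlat V H B) (hsub : ∀ I ∈ H, I ⊆ A ∪ (V \ B) → I.Subsingleton) :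
    IsCFlat V H (A ∪ (V \ B)) := by
  refine ⟨union_subset hA.1 sdiff_subset, fun I hI hID r hr => ?_⟩
  have hrA : r ∉ A := fun h => hr.2 (.inl h)
  have hrB : r ∈ B := by_contra fun h => hr.2 (.inr ⟨hr.1, h⟩)
  have hr_face : {r} ∈ H := by
    simpa using hA.2 ∅ hcpx.empty_mem_s6 (empty_subset A) r ⟨hr.1, hrA⟩
  rcases (hsub I hI hID).eq_empty_or_singleton with rfl | ⟨x, rfl⟩
  · simpa using hr_face
  · rcases hID (mem_singleton x) with hxA | hxVB
    · exact hA.2 {x} hI (singleton_subset_iff.2 hxA) r ⟨hr.1, hrA⟩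
    · rw [pair_comm]
      exact hB.2 {r} hr_face (singleton_subset_iff.2 hrB) x hxVB

end Flats

lemma OrderIso.eq_zero_and_eq_one_of_lt_of_lt {P : Type*} [PartialOrder P] (φ : Fin 3 ≃o P)
    {a b c : P} (hab : a < b) (hbc : b < c) : a = φ 0 ∧ b = φ 1 := by
  have h₁ := φ.symm.strictMono hab
  have h₂ := φ.symm.strictMono hbc
  simp only [Fin.lt_def] at h₁ h₂
  have ha : φ.symm a = 0 := by ext; rw [Fin.val_zero]; omega
  have hb : φ.symm b = 1 := by ext; rw [Fin.val_one]; omega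
  exact ⟨by rw [← ha, apply_symm_apply], by rw [← hb, apply_symm_apply]⟩

theorem BoolRep.isEmpty_orderIso_fin_three {α : Type u} {V : Set α} {H : Set (Set α)}
    (hcpx : IsCpx V H) (hbr : BoolRep V H) :
    IsEmpty (Fin 3 ≃o {F : Set α // IsCFlat V H F}) := by
  refine ⟨fun φ => ?_⟩
  set A := (φ 0).1
  set B := (φ 1).1
  set C := (φ 2).1
  have hAB : A ⊂ B := φ.strictMono (by decide : (0 : Fin 3) < 1)
  have hBC : B ⊂ C := φ.strictMono (by decide : (1 : Fin 3) < 2)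
  have hD : IsCFlat V H (A ∪ (V \ B)) := by
    refine isCFlat_union_diff hcpx (φ 0).2 (φ 1).2 fun I hI hID => ?_
    refine (hbr I hI).subsingleton_or_exists_chain.resolve_right ?_
    rintro ⟨F₀, F₁, F₂, h₀, h₁, h₂, h₀₁, h₁₂, x, hxI, hxF, hxF₀⟩
    obtain ⟨h₀A, h₁B⟩ := φ.eq_zero_and_eq_one_of_lt_of_lt
      (a := ⟨F₀, h₀⟩) (b := ⟨F₁, h₁⟩) (c := ⟨F₂, h₂⟩) h₀₁ h₁₂
    simp only [Subtype.ext_iff] at h₀A h₁B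
    rw [h₀A] at hxF₀
    rw [h₁B] at hxF
    exact (hID hxI).elim hxF₀ fun hxVB => hxVB.2 hxF
  obtain ⟨p, hpC, hpB⟩ := exists_of_ssubset hBC
  obtain ⟨q, hqB, hqA⟩ := exists_of_ssubset hAB
  have hpD : p ∈ A ∪ (V \ B) := .inr ⟨(φ 2).2.1 hpC, hpB⟩
  have hqD : q ∉ A ∪ (V \ B) := fun h => h.elim hqA fun h => h.2 hqB
  obtain ⟨j, hj⟩ := φ.surjective ⟨_, hD⟩
  have hDj : A ∪ (V \ B) = (φ j).1 := by rw [hj]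
  rw [hDj] at hpD hqD
  obtain rfl | rfl | rfl : j = 0 ∨ j = 1 ∨ j = 2 := by fin_cases j <;> simp
  · exact hpB (hAB.1 hpD)
  · exact hpB hpD
  · exact hqD (hBC.1 hqB)

section OneVertex

variable {β : Type u} (v w : β)

lemma isCpx_singleton_powerset : IsCpx {v} (𝒫 ({v} \ {w})) :=
  ⟨finite_singleton v, singleton_nonempty v, ⟨∅, empty_subset _⟩,
    fun _ hX => hX.trans sdiff_subset, fun _ hX _ hY => hY.trans hX⟩

variable {v w} in
lemma isCFlat_singleton_powerset_iff {F : Set β} :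
    IsCFlat {v} (𝒫 ({v} \ {w})) F ↔ F ⊆ {v} ∧ (v = w → v ∈ F) := by
  refine ⟨fun hF => ⟨hF.1, fun hvw => by_contra fun hvF => ?_⟩, fun ⟨hFv, hvF⟩ => ⟨hFv, ?_⟩⟩
  · exact (hF.2 ∅ (empty_subset _) (empty_subset F) v ⟨rfl, hvF⟩ (mem_insert v ∅)).2 hvw
  · rintro I hI - p ⟨rfl, hpF⟩
    exact insert_subset ⟨rfl, fun hpw => hpF (hvF hpw)⟩ hI

lemma boolRep_singleton_powerset : BoolRep {v} (𝒫 ({v} \ {w})) := by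
  intro X hX
  rcases subset_singleton_iff_eq.1 (hX.trans sdiff_subset) with rfl | rfl
  · refine ⟨0, fun _ => {v}, Fin.elim0, fun _ => ?_, fun i j hij => ?_, fun i => i.elim0, ?_,
      fun i => i.elim0⟩
    · exact isCFlat_singleton_powerset_iff.2 ⟨subset_rfl, fun _ => rfl⟩
    · exact absurd hij (by omega)
    · exact range_eq_empty _ |>.symm
  · have hvw : v ≠ w := fun h => (hX rfl).2 h
    refine ⟨1, ![∅, {v}], fun _ => v, fun i => ?_, ?_, fun i j _ => Subsingleton.elim i j,
      (range_const).symm, fun i => ?_⟩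
    · fin_cases i
      · exact isCFlat_singleton_powerset_iff.2 ⟨empty_subset _, fun h => absurd h hvw⟩
      · exact isCFlat_singleton_powerset_iff.2 ⟨subset_rfl, fun _ => rfl⟩
    · simp [Fin.strictMono_iff_lt_succ]
    · fin_cases i
      simp

end OneVertex

lemma eq_bot_or_eq_top_of_card_le_two {L : Type*} [PartialOrder L] [BoundedOrder L] [Fintype L]
    (hL : Fintype.card L ≤ 2) (z : L) : z = ⊥ ∨ z = ⊤ := by
  by_contra! ⟨hz_bot, hz_top⟩
  have hbot_top : (⊥ : L) ≠ ⊤ := fun h => hz_bot (le_bot_iff.1 (h ▸ le_top))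
  have := Fintype.two_lt_card_iff.2 ⟨⊥, ⊤, z, hbot_top, hz_bot.symm, hz_top.symm⟩
  omega

lemma nonempty_orderIso_isCFlat_singleton_top {L : Type u} [PartialOrder L] [BoundedOrder L]
    (hL : ∀ z : L, z = ⊥ ∨ z = ⊤) :
    Nonempty (L ≃o {F : Set L // IsCFlat {⊤} (𝒫 ({⊤} \ {⊥})) F}) := by
  let f : L ↪o {F : Set L // IsCFlat {⊤} (𝒫 ({⊤} \ {⊥})) F} := OrderEmbedding.ofMapLEIff
    (fun z => ⟨Iic z ∩ {⊤}, isCFlat_singleton_powerset_iff.2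
      ⟨inter_subset_right, fun h => ⟨h ▸ bot_le, rfl⟩⟩⟩)
    fun a b => by
      refine ⟨fun hab => ?_, fun hab => inter_subset_inter_left _ (Iic_subset_Iic.2 hab)⟩
      rcases hL a with rfl | rfl
      · exact bot_le
      · exact (hab ⟨le_rfl, rfl⟩).1
  refine ⟨OrderIso.ofSurjective f fun ⟨F, hF⟩ => ?_⟩
  obtain ⟨hF_top, htop_mem⟩ := isCFlat_singleton_powerset_iff.1 hF
  rcases subset_singleton_iff_eq.1 hF_top with rfl | rfl
  · have hbot_top : (⊤ : L) ≠ ⊥ := fun h => htop_mem h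
    refine ⟨⊥, Subtype.ext (eq_empty_of_forall_notMem fun u ⟨hu, hu_top⟩ => hbot_top ?_)⟩
    exact le_bot_iff.1 (hu_top ▸ hu)
  · exact ⟨⊤, Subtype.ext (by ext; simp [f])⟩

theorem exists_boolRep_orderIso_of_card_le_two (L : Type u) [Lattice L] [Fintype L] [Nonempty L]
    (hL : Fintype.card L ≤ 2) :
    ∃ (β : Type u) (V : Set β) (H : Set (Set β)), IsCpx V H ∧ BoolRep V H ∧
      Nonempty (L ≃o {F : Set β // IsCFlat V H F}) := by
  let _ := Fintype.toBoundedOrder L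
  exact ⟨L, {⊤}, 𝒫 ({⊤} \ {⊥}), isCpx_singleton_powerset _ _, boolRep_singleton_powerset _ _,
    nonempty_orderIso_isCFlat_singleton_top (eq_bot_or_eq_top_of_card_le_two hL)⟩

/-- The 3-element chain is not isomorphic to the lattice of flats of any
boolean representable finite simplicial complex, whereas every (nonempty)
lattice with at most 2 elements is isomorphic to the lattice of flats of some
boolean representable finite simplicial complex. -/
theorem stmt6 :
    (∀ (α : Type u) (V : Set α) (H : Set (Set α)), IsCpx V H → BoolRep V H →
        IsEmpty (Fin 3 ≃o {F : Set α // IsCFlat V H F})) ∧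
    (∀ (L : Type u) [Lattice L] [Fintype L] [Nonempty L], Fintype.card L ≤ 2 →
        ∃ (β : Type u) (V : Set β) (H : Set (Set β)), IsCpx V H ∧ BoolRep V H ∧
          Nonempty (L ≃o {F : Set β // IsCFlat V H F})) := by
  exact ⟨fun _ _ _ => BoolRep.isEmpty_orderIso_fin_three,
    fun L _ _ _ => exists_boolRep_orderIso_of_card_le_two L⟩
end

section
/- Let L be a finite atomistic lattice. For every x ∈ L, the set xξ = {a ∈ At(L) : a ≤ x} is a flat of the simplicial complex 𝒯_L = (At(L), T_L). -/
universe u v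

/-- `xξ` : the set of atoms of `L` lying below `x`. -/
def latxi (L : Type u) [Lattice L] [OrderBot L] (x : L) : Set L :=
  {a | IsAtom a ∧ a ≤ x}

/-- `T_L` : the set of transversals of chains in `L`, i.e. sets of atoms `A`
admitting an enumeration `e 0, …, e (m-1)` and a chain `c 0 < … < c m` in `L`
with `e i ∈ (c (i+1))ξ \ (c i)ξ`. -/
def TLat (L : Type u) [Lattice L] [OrderBot L] : Set (Set L) :=
  {A | ∃ (m : ℕ) (c : Fin (m + 1) → L) (e : Fin m → L), StrictMono c ∧
      Function.Injective e ∧ A = Set.range e ∧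
      ∀ i : Fin m, e i ∈ latxi L (c i.succ) \ latxi L (c i.castSucc)}

/-- A lattice is atomistic if every element is a join of atoms. -/
def AtomisticLat (L : Type u) [Lattice L] [OrderBot L] : Prop :=
  ∀ x : L, ∃ s : Finset L, (∀ a ∈ s, IsAtom a) ∧ x = s.sup id

/-!
Let `I ∈ T_L` be a transversal of the chain `c₀ < ⋯ < cₘ` with `I ⊆ xξ`, and let `p` be an atom
not below `x`. Meeting the chain with `x` keeps `I` a transversal, since every element of `I` lies
below `x`; the top of the new chain is below `x`, so `p` is not below it, and extending the chain
by `(cₘ ⊓ x) ⊔ p` makes `I ∪ {p}` a transversal.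
-/

namespace TLat

variable {L : Type u} [Lattice L] [OrderBot L] {m : ℕ}

/-- Monotonicity of `c` is enough: the transversal condition forces the chain to be strict. -/
def IsChainTransversal (c : Fin (m + 1) → L) (e : Fin m → L) : Prop :=
  Monotone c ∧ ∀ i, e i ∈ latxi L (c i.succ) \ latxi L (c i.castSucc)

namespace IsChainTransversal

variable {c : Fin (m + 1) → L} {e : Fin m → L}

theorem strictMono (h : IsChainTransversal c e) : StrictMono c :=
  Fin.strictMono_iff_lt_succ.2 fun i =>
    (h.1 (Fin.castSucc_le_succ i)).lt_of_ne fun hi => (h.2 i).2 (hi ▸ (h.2 i).1)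

theorem injective (h : IsChainTransversal c e) : Function.Injective e := by
  have below_ne {i j : Fin m} (hij : i < j) : e i ≠ e j := fun hij' =>
    (h.2 j).2 ⟨(h.2 j).1.1, hij' ▸ (h.2 i).1.2.trans (h.1 (Fin.succ_le_castSucc_iff.2 hij))⟩
  intro i j hij
  by_contra hne
  rcases lt_or_gt_of_ne hne with hlt | hlt
  exacts [below_ne hlt hij, below_ne hlt hij.symm]

theorem range_mem (h : IsChainTransversal c e) : Set.range e ∈ TLat L :=
  ⟨m, c, e, h.strictMono, h.injective, rfl, h.2⟩

theorem inf {x : L} (h : IsChainTransversal c e) (hx : ∀ i, e i ≤ x) :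
    IsChainTransversal (fun i => c i ⊓ x) e :=
  ⟨fun _ _ hij => inf_le_inf_right x (h.1 hij), fun i =>
    ⟨⟨(h.2 i).1.1, le_inf (h.2 i).1.2 (hx i)⟩,
      fun hi => (h.2 i).2 ⟨hi.1, hi.2.trans inf_le_left⟩⟩⟩

theorem snoc {p : L} (h : IsChainTransversal c e) (hp : IsAtom p) (hpc : ¬p ≤ c (Fin.last m)) :
    IsChainTransversal (Fin.snoc c (c (Fin.last m) ⊔ p) : Fin (m + 2) → L) (Fin.snoc e p) := by
  refine ⟨Fin.monotone_iff_le_succ.2 fun i => ?_, fun i => ?_⟩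
  · induction i using Fin.lastCases with
    | last => simp
    | cast j =>
      rw [Fin.succ_castSucc, Fin.snoc_castSucc, Fin.snoc_castSucc]
      exact h.1 (Fin.castSucc_le_succ j)
  · induction i using Fin.lastCases with
    | last => simpa [latxi] using ⟨hp, fun _ => hpc⟩
    | cast j =>
      rw [Fin.succ_castSucc, Fin.snoc_castSucc, Fin.snoc_castSucc, Fin.snoc_castSucc]
      exact h.2 j

end IsChainTransversal

end TLat

theorem stmt9_general (L : Type u) [Lattice L] [OrderBot L] :
    ∀ x : L, IsCFlat {a : L | IsAtom a} (TLat L) (latxi L x) := by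
  intro x
  refine ⟨fun a ha => ha.1, ?_⟩
  rintro I ⟨m, c, e, hc, -, rfl, he⟩ hIx p ⟨hp, hpx⟩
  have hex : ∀ i, e i ≤ x := fun i => (hIx ⟨i, rfl⟩).2
  have hinf : TLat.IsChainTransversal (fun i => c i ⊓ x) e :=
    TLat.IsChainTransversal.inf ⟨hc.monotone, he⟩ hex
  rw [← Fin.range_snoc]
  exact (hinf.snoc hp fun h => hpx ⟨hp, h.trans inf_le_right⟩).range_mem

/-- For a finite atomistic lattice `L`, every set `xξ = {a ∈ At(L) : a ≤ x}`
is a flat of the simplicial complex `𝒯_L = (At(L), T_L)`. -/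
theorem stmt9 (L : Type u) [Lattice L] [Fintype L] [OrderBot L]
    (hA : AtomisticLat L) :
    ∀ x : L, IsCFlat {a : L | IsAtom a} (TLat L) (latxi L x) :=
  stmt9_general L
end

section
/- Let L be a finite atomistic lattice. The map ξ : L → Fl(𝒯_L), x ↦ xξ = {a ∈ At(L) : a ≤ x}, is injective and satisfies x ≤ y if and only if xξ ⊆ yξ; hence ξ is a lattice isomorphism of L onto its image Lξ ⊆ Fl(𝒯_L). -/
universe u v

section

variable {L : Type u} [Lattice L] [OrderBot L]

lemma latxi_mono : Monotone (latxi L) := fun _ _ hxy _ ha => ⟨ha.1, ha.2.trans hxy⟩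

lemma latxi_subset_latxi_iff (hA : AtomisticLat L) {x y : L} :
    latxi L x ⊆ latxi L y ↔ x ≤ y := by
  refine ⟨fun hxy => ?_, fun hxy => latxi_mono hxy⟩
  obtain ⟨s, hs, rfl⟩ := hA x
  exact Finset.sup_le fun a ha => (hxy ⟨hs a ha, Finset.le_sup (f := id) ha⟩).2

lemma latxi_injective (hA : AtomisticLat L) : Function.Injective (latxi L) := fun _ _ hxy =>
  le_antisymm ((latxi_subset_latxi_iff hA).1 hxy.le) ((latxi_subset_latxi_iff hA).1 hxy.ge)

def IsChainTransversal {m : ℕ} (c : Fin (m + 1) → L) (e : Fin m → L) : Prop :=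
  StrictMono c ∧ Function.Injective e ∧
    ∀ i, e i ∈ latxi L (c i.succ) \ latxi L (c i.castSucc)

namespace IsChainTransversal

variable {m : ℕ} {c : Fin (m + 1) → L} {e : Fin m → L}

lemma range_mem_TLat (h : IsChainTransversal c e) : Set.range e ∈ TLat L :=
  ⟨m, c, e, h.1, h.2.1, rfl, h.2.2⟩

lemma le_last (h : IsChainTransversal c e) (i : Fin m) : e i ≤ c (Fin.last m) :=
  (h.2.2 i).1.2.trans (h.1.monotone (Fin.le_last _))

/-- Each `e i` still separates consecutive links of the cut-down chain, so it stays strict. -/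
lemma inf (h : IsChainTransversal c e) {x : L} (hex : ∀ i, e i ≤ x) :
    IsChainTransversal (c · ⊓ x) e := by
  have hdiff : ∀ i, e i ∈ latxi L (c i.succ ⊓ x) \ latxi L (c i.castSucc ⊓ x) := fun i =>
    ⟨⟨(h.2.2 i).1.1, le_inf (h.2.2 i).1.2 (hex i)⟩,
      fun hi => (h.2.2 i).2 ⟨hi.1, hi.2.trans inf_le_left⟩⟩
  refine ⟨Fin.strictMono_iff_lt_succ.2 fun i => ?_, h.2.1, hdiff⟩
  refine (inf_le_inf_right x (h.1.monotone i.castSucc_le_succ)).lt_of_not_ge fun hge => ?_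
  exact (hdiff i).2 (latxi_mono hge (hdiff i).1)

lemma snoc (h : IsChainTransversal c e) {p : L} (hp : IsAtom p) (hpc : ¬p ≤ c (Fin.last m)) :
    IsChainTransversal (Fin.snoc c (c (Fin.last m) ⊔ p)) (Fin.snoc e p) := by
  refine ⟨?_, Fin.snoc_injective_of_injective h.2.1 ?_, fun i => ?_⟩
  · rw [← Fin.insertNth_last']
    exact Fin.strictMono_insertNth_last h.1 _ (left_lt_sup.2 hpc)
  · rintro ⟨i, rfl⟩
    exact hpc (h.le_last i)
  · induction i using Fin.lastCases with
    | last =>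
      simp only [Fin.snoc_last, Fin.succ_last, Fin.snoc_castSucc]
      exact ⟨⟨hp, le_sup_right⟩, fun hmem => hpc hmem.2⟩
    | cast j =>
      simp only [Fin.snoc_castSucc, Fin.succ_castSucc]
      exact h.2.2 j

end IsChainTransversal

/-- A transversal below `x` is extended by an atom `p ≰ x` by first cutting its chain down
by `x` and then appending `(top of the chain) ⊔ p`. -/
lemma isCFlat_latxi (x : L) : IsCFlat {a : L | IsAtom a} (TLat L) (latxi L x) := by
  refine ⟨fun a ha => ha.1, ?_⟩
  rintro I ⟨m, c, e, hc, he, rfl, hce⟩ hIx p ⟨hp, hpx⟩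
  have hex : ∀ i, e i ≤ x := fun i => (hIx ⟨i, rfl⟩).2
  have hcx : IsChainTransversal (c · ⊓ x) e := IsChainTransversal.inf ⟨hc, he, hce⟩ hex
  rw [← Fin.range_snoc]
  exact (hcx.snoc hp fun hp' => hpx ⟨hp, hp'.trans inf_le_right⟩).range_mem_TLat

end

theorem stmt10_general (L : Type u) [Lattice L] [OrderBot L]
    (hA : AtomisticLat L) :
    Function.Injective (latxi L) ∧
    (∀ x y : L, x ≤ y ↔ latxi L x ⊆ latxi L y) ∧
    (∀ x : L, latxi L x ∈ {F : Set L | IsCFlat {a : L | IsAtom a} (TLat L) F}) ∧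
    Nonempty (L ≃o {F : Set L // F ∈ Set.range (latxi L)}) :=
  ⟨latxi_injective hA, fun _ _ => (latxi_subset_latxi_iff hA).symm, isCFlat_latxi,
    ⟨{ toEquiv := Equiv.ofInjective (latxi L) (latxi_injective hA)
       map_rel_iff' := latxi_subset_latxi_iff hA }⟩⟩

/-- For a finite atomistic lattice `L`, the map `ξ : x ↦ {a ∈ At(L) : a ≤ x}` is
injective, satisfies `x ≤ y ↔ xξ ⊆ yξ`, and is hence a lattice (order)
isomorphism of `L` onto its image `Lξ ⊆ Fl(𝒯_L)` ordered by inclusion. -/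
theorem stmt10 (L : Type u) [Lattice L] [Fintype L] [OrderBot L]
    (hA : AtomisticLat L) :
    Function.Injective (latxi L) ∧
    (∀ x y : L, x ≤ y ↔ latxi L x ⊆ latxi L y) ∧
    (∀ x : L, latxi L x ∈ {F : Set L | IsCFlat {a : L | IsAtom a} (TLat L) F}) ∧
    Nonempty (L ≃o {F : Set L // F ∈ Set.range (latxi L)}) :=
  stmt10_general L hA
end

section
/- Let L be a finite atomistic lattice. Then the simplicial complex 𝒯_L = (At(L), T_L) is boolean representable: every A ∈ T_L is a transversal of the successive differences for some chain of flats of 𝒯_L. -/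
universe u v

/-!
For every `x : L` the atom set `xξ` is a flat of `𝒯_L`: a transversal of a chain `(c i)` lying
inside `xξ` is also a transversal of the chain `(c i ⊓ x)`, and an atom `p ≰ x` extends it by
the new top element `x ⊔ p`. The chain `(c i)` witnessing `A ∈ T_L` then gives the chain of flats
`(c i)ξ`, which is strictly increasing since `e i ∈ (c (i+1))ξ \ (c i)ξ`.
-/

section SuccessiveDifferences

variable {α : Type*} {m : ℕ} {F : Fin (m + 1) → Set α} {x : Fin m → α}

lemma strictMono_of_mem_succ_sdiff (hF : Monotone F)
    (hx : ∀ i, x i ∈ F i.succ \ F i.castSucc) : StrictMono F :=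
  Fin.strictMono_iff_lt_succ.2 fun i =>
    Set.ssubset_iff_subset_ne.2 ⟨hF i.castSucc_le_succ, fun h => (hx i).2 (h ▸ (hx i).1)⟩

lemma injective_of_mem_succ_sdiff (hF : Monotone F)
    (hx : ∀ i, x i ∈ F i.succ \ F i.castSucc) : Function.Injective x :=
  .of_lt_imp_ne fun i j hij hxij =>
    (hx j).2 (hF (Fin.succ_le_castSucc_iff.2 hij) (hxij ▸ (hx i).1))

end SuccessiveDifferences

variable {L : Type u} [Lattice L] [OrderBot L]

lemma latxi_inf (y z : L) : latxi L (y ⊓ z) = latxi L y ∩ latxi L z := by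
  ext a
  simp only [latxi, Set.mem_ofPred_eq, Set.mem_inter_iff, le_inf_iff]
  tauto

lemma range_mem_TLat {m : ℕ} {c : Fin (m + 1) → L} {e : Fin m → L} (hc : Monotone c)
    (he : ∀ i, e i ∈ latxi L (c i.succ) \ latxi L (c i.castSucc)) : Set.range e ∈ TLat L :=
  have hξc : Monotone (latxi L ∘ c) := latxi_mono.comp hc
  ⟨m, c, e, hc.strictMono_of_injective (strictMono_of_mem_succ_sdiff hξc he).injective.of_comp,
    injective_of_mem_succ_sdiff hξc he, rfl, he⟩

theorem stmt11_general (L : Type u) [Lattice L] [OrderBot L] :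
    BoolRep {a : L | IsAtom a} (TLat L) := by
  rintro A ⟨m, c, e, hc, he, rfl, hmem⟩
  exact ⟨m, latxi L ∘ c, e, fun i => isCFlat_latxi (c i),
    strictMono_of_mem_succ_sdiff (latxi_mono.comp hc.monotone) hmem, he, rfl, hmem⟩

/-- For a finite atomistic lattice `L`, the simplicial complex
`𝒯_L = (At(L), T_L)` is boolean representable: every `A ∈ T_L` is a transversal
of the successive differences for some chain of flats of `𝒯_L`. -/
theorem stmt11 (L : Type u) [Lattice L] [Fintype L] [OrderBot L]
    (hA : AtomisticLat L) :
    BoolRep {a : L | IsAtom a} (TLat L) :=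
  stmt11_general L
end

section
/- Let L be a finite atomistic lattice and let ξ : L → Fl(𝒯_L) be the map x ↦ xξ = {a ∈ At(L) : a ≤ x}. Then ξ is surjective if and only if for every flat F of 𝒯_L one has (⋁F)ξ ⊆ F, i.e., every atom of L lying below the join (in L) of the elements of F already belongs to F. -/
universe u v

/-- For a finite atomistic lattice `L`, the map `ξ : L → Fl(𝒯_L)` is surjective
if and only if for every flat `F` of `𝒯_L` one has `(⋁F)ξ ⊆ F`, i.e. every atom
of `L` below the join (in `L`) of the elements of `F` already belongs to `F`. -/
theorem stmt13 (L : Type u) [Lattice L] [Fintype L] [OrderBot L]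
    (hA : AtomisticLat L) :
    (∀ F : Set L, IsCFlat {a : L | IsAtom a} (TLat L) F → ∃ x : L, latxi L x = F) ↔
    (∀ F : Set L, IsCFlat {a : L | IsAtom a} (TLat L) F →
      latxi L ((Set.toFinite F).toFinset.sup id) ⊆ F) := by
  constructor
  · intro h F hF
    obtain ⟨x, hx⟩ := h F hF
    obtain ⟨s, hs, hxs⟩ := hA x
    have hxeq : x = (Set.toFinite F).toFinset.sup id := by
      apply le_antisymm
      · rw [hxs]
        apply Finset.sup_le
        intro a ha
        have hamem : a ∈ F := by
          rw [← hx]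
          exact ⟨hs a ha, by rw [hxs]; exact Finset.le_sup (f := id) ha⟩
        exact Finset.le_sup (f := id) ((Set.Finite.mem_toFinset _).mpr hamem)
      · apply Finset.sup_le
        intro b hb
        have : b ∈ F := (Set.Finite.mem_toFinset _).mp hb
        rw [← hx] at this
        exact this.2
    rw [← hxeq, hx]
  · intro h F hF
    refine ⟨(Set.toFinite F).toFinset.sup id, le_antisymm (h F hF) ?_⟩
    intro a ha
    exact ⟨hF.1 ha, Finset.le_sup (f := id) ((Set.Finite.mem_toFinset _).mpr ha)⟩
end

section
/- Let L be the six-element lattice with bottom ⊥, atoms a_1, a_2, a_3, an element c, and top ⊤, where a_1 < c, a_2 < c, c < ⊤, a_3 < ⊤, and a_3 is incomparable with a_1, a_2 and c (so a_1 ∨ a_2 = c and a_1 ∨ a_3 = a_2 ∨ a_3 = c ∨ a_3 = ⊤). Then L is atomistic, but L is not isomorphic to the lattice of flats of any boolean representable finite simplicial complex. -/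
universe u v

lemma flat_inter {α : Type v} {V : Set α} {H : Set (Set α)} {F G : Set α}
    (hF : IsCFlat V H F) (hG : IsCFlat V H G) : IsCFlat V H (F ∩ G) := by
  refine ⟨Set.inter_subset_left.trans hF.1, fun I hI hIFG p hp => ?_⟩
  rcases (not_and_or.mp (fun h : p ∈ F ∩ G => hp.2 h)) with h | h
  · exact hF.2 I hI (hIFG.trans Set.inter_subset_left) p ⟨hp.1, h⟩
  · exact hG.2 I hI (hIFG.trans Set.inter_subset_right) p ⟨hp.1, h⟩

lemma flat_univV {α : Type v} (V : Set α) (H : Set (Set α)) : IsCFlat V H V :=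
  ⟨subset_rfl, fun I _ _ p hp => absurd hp.1 hp.2⟩

set_option maxHeartbeats 2000000 in
/-- The six-element lattice `{⊥, a₁, a₂, a₃, c, ⊤}` in which `a₁, a₂, a₃` are the
atoms, `a₁, a₂ < c < ⊤`, `a₃ < ⊤`, and `a₃` is incomparable with `a₁, a₂, c`
(so `a₁ ∨ a₂ = c` and `a₁ ∨ a₃ = a₂ ∨ a₃ = c ∨ a₃ = ⊤`), is atomistic but is not
isomorphic to the lattice of flats of any boolean representable finite
simplicial complex. -/
theorem stmt16 (L : Type u) [Lattice L] [Fintype L] [BoundedOrder L]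
    (a₁ a₂ a₃ c : L)
    (hdist : [⊥, a₁, a₂, a₃, c, (⊤ : L)].Pairwise (· ≠ ·))
    (hall : ∀ x : L, x = ⊥ ∨ x = a₁ ∨ x = a₂ ∨ x = a₃ ∨ x = c ∨ x = ⊤)
    (hle : ∀ x y : L, x ≤ y ↔ (x = ⊥ ∨ x = y ∨
      (x = a₁ ∧ (y = c ∨ y = ⊤)) ∨ (x = a₂ ∧ (y = c ∨ y = ⊤)) ∨
      (x = a₃ ∧ y = ⊤) ∨ (x = c ∧ y = ⊤))) :
    AtomisticLat L ∧
    ¬ ∃ (α : Type v) (V : Set α) (H : Set (Set α)), IsCpx V H ∧ BoolRep V H ∧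
        Nonempty (L ≃o {F : Set α // IsCFlat V H F}) := by
  classical
  simp only [List.pairwise_cons, List.mem_cons, List.not_mem_nil, List.mem_singleton] at hdist
  obtain ⟨hb, h1, h2, h3, hc, -⟩ := hdist
  have hb1 : (⊥ : L) ≠ a₁ := hb a₁ (by tauto)
  have hb2 : (⊥ : L) ≠ a₂ := hb a₂ (by tauto)
  have hb3 : (⊥ : L) ≠ a₃ := hb a₃ (by tauto)
  have hbc : (⊥ : L) ≠ c := hb c (by tauto)
  have hbt : (⊥ : L) ≠ ⊤ := hb ⊤ (by tauto)
  have h12 : a₁ ≠ a₂ := h1 a₂ (by tauto)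
  have h13 : a₁ ≠ a₃ := h1 a₃ (by tauto)
  have h1c : a₁ ≠ c := h1 c (by tauto)
  have h1t : a₁ ≠ ⊤ := h1 ⊤ (by tauto)
  have h23 : a₂ ≠ a₃ := h2 a₃ (by tauto)
  have h2c : a₂ ≠ c := h2 c (by tauto)
  have h2t : a₂ ≠ ⊤ := h2 ⊤ (by tauto)
  have h3c : a₃ ≠ c := h3 c (by tauto)
  have h3t : a₃ ≠ ⊤ := h3 ⊤ (by tauto)
  have hct : c ≠ ⊤ := hc ⊤ (by tauto)
  -- structural order facts
  have le_a1 : ∀ z : L, z ≤ a₁ → z = ⊥ ∨ z = a₁ := by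
    intro z h; have := (hle z a₁).mp h; tauto
  have le_a2 : ∀ z : L, z ≤ a₂ → z = ⊥ ∨ z = a₂ := by
    intro z h; have := (hle z a₂).mp h; tauto
  have le_a3 : ∀ z : L, z ≤ a₃ → z = ⊥ ∨ z = a₃ := by
    intro z h; have := (hle z a₃).mp h; tauto
  have le_c : ∀ z : L, z ≤ c → z = ⊥ ∨ z = a₁ ∨ z = a₂ ∨ z = c := by
    intro z h; have := (hle z c).mp h; tauto
  have h1lec : a₁ ≤ c := (hle a₁ c).mpr (by tauto)
  have h2lec : a₂ ≤ c := (hle a₂ c).mpr (by tauto)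
  have atom1 : IsAtom a₁ := by
    refine ⟨hb1.symm, fun b hb' => ?_⟩
    rcases le_a1 b hb'.le with h | h
    · exact h
    · exact absurd h hb'.ne
  have atom2 : IsAtom a₂ := by
    refine ⟨hb2.symm, fun b hb' => ?_⟩
    rcases le_a2 b hb'.le with h | h
    · exact h
    · exact absurd h hb'.ne
  have atom3 : IsAtom a₃ := by
    refine ⟨hb3.symm, fun b hb' => ?_⟩
    rcases le_a3 b hb'.le with h | h
    · exact h
    · exact absurd h hb'.ne
  have hceq : c = a₁ ⊔ a₂ := by
    refine le_antisymm ?_ (sup_le h1lec h2lec)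
    rcases hall (a₁ ⊔ a₂) with h | h | h | h | h | h
    · exact absurd (le_bot_iff.mp (le_sup_left.trans_eq h : a₁ ≤ ⊥)) hb1.symm
    · exact absurd ((le_a1 _ (le_sup_right.trans_eq h : a₂ ≤ a₁)).resolve_left hb2.symm) (Ne.symm h12)
    · exact absurd ((le_a2 _ (le_sup_left.trans_eq h : a₁ ≤ a₂)).resolve_left hb1.symm) h12
    · exact absurd ((le_a3 _ (le_sup_left.trans_eq h : a₁ ≤ a₃)).resolve_left hb1.symm) h13
    · exact h.ge
    · exact h ▸ le_top
  have hteq : (⊤ : L) = a₁ ⊔ a₃ := by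
    refine le_antisymm ?_ le_top
    rcases hall (a₁ ⊔ a₃) with h | h | h | h | h | h
    · exact absurd (le_bot_iff.mp (le_sup_left.trans_eq h : a₁ ≤ ⊥)) hb1.symm
    · exact absurd ((le_a1 _ (le_sup_right.trans_eq h : a₃ ≤ a₁)).resolve_left hb3.symm) (Ne.symm h13)
    · exact absurd ((le_a2 _ (le_sup_left.trans_eq h : a₁ ≤ a₂)).resolve_left hb1.symm) h12
    · exact absurd ((le_a3 _ (le_sup_left.trans_eq h : a₁ ≤ a₃)).resolve_left hb1.symm) h13
    · exact absurd ((le_c _ (le_sup_right.trans_eq h : a₃ ≤ c)).resolve_left hb3.symm) (by tauto)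
    · exact h.ge
  constructor
  · intro x
    rcases hall x with hx | hx | hx | hx | hx | hx
    · exact ⟨∅, by simp, by simp [hx]⟩
    · exact ⟨(Singleton.singleton a₁ : Finset L), by simpa using atom1, by simp [hx]⟩
    · exact ⟨(Singleton.singleton a₂ : Finset L), by simpa using atom2, by simp [hx]⟩
    · exact ⟨(Singleton.singleton a₃ : Finset L), by simpa using atom3, by simp [hx]⟩
    · refine ⟨(insert a₁ (Singleton.singleton a₂) : Finset L), ?_, ?_⟩
      · intro a ha; simp at ha; rcases ha with rfl | rfl
        exacts [atom1, atom2]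
      · rw [hx, hceq]; simp
    · refine ⟨(insert a₁ (Singleton.singleton a₃) : Finset L), ?_, ?_⟩
      · intro a ha; simp at ha; rcases ha with rfl | rfl
        exacts [atom1, atom3]
      · rw [hx, hteq]; simp
  · rintro ⟨α, V, H, ⟨hVfin, hVne, hHne, hHsub, hHdc⟩, hbr, ⟨φ⟩⟩
    -- basic translation facts
    have hsubrel : ∀ z y : L, z ≤ y ↔ (↑(φ z) : Set α) ⊆ ↑(φ y) := by
      intro z y
      rw [← φ.le_iff_le]
      exact ⟨fun h => h, fun h => h⟩
    have hsurj : ∀ G : Set α, IsCFlat V H G → ∃ z : L, (↑(φ z) : Set α) = G :=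
      fun G hG => ⟨φ.symm ⟨G, hG⟩, by simp⟩
    have hEqL : ∀ z y : L, (↑(φ z) : Set α) = ↑(φ y) → z = y :=
      fun z y h => φ.injective (Subtype.ext h)
    have hTop : (↑(φ ⊤) : Set α) = V := by
      obtain ⟨z, hz⟩ := hsurj V (flat_univV V H)
      refine subset_antisymm (φ ⊤).2.1 ?_
      exact hz.symm.trans_le ((hsubrel z ⊤).mp le_top)
    have hsix : ∀ G : Set α, IsCFlat V H G → G = ↑(φ ⊥) ∨ G = ↑(φ a₁) ∨ G = ↑(φ a₂) ∨
        G = ↑(φ a₃) ∨ G = ↑(φ c) ∨ G = V := by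
      intro G hG
      obtain ⟨z, hz⟩ := hsurj G hG
      subst hz
      rcases hall z with h | h | h | h | h | h <;> rw [h]
      · exact Or.inl rfl
      · exact Or.inr (Or.inl rfl)
      · exact Or.inr (Or.inr (Or.inl rfl))
      · exact Or.inr (Or.inr (Or.inr (Or.inl rfl)))
      · exact Or.inr (Or.inr (Or.inr (Or.inr (Or.inl rfl))))
      · exact Or.inr (Or.inr (Or.inr (Or.inr (Or.inr hTop))))
    have hbotsub : ∀ z : L, (↑(φ ⊥) : Set α) ⊆ ↑(φ z) := fun z => (hsubrel ⊥ z).mp bot_le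
    have hBflatsub : ∀ G : Set α, IsCFlat V H G → (↑(φ ⊥) : Set α) ⊆ G := by
      intro G hG
      obtain ⟨z, hz⟩ := hsurj G hG
      exact hz ▸ hbotsub z
    have hinter : ∀ z y : L, (∀ t : L, t ≤ z → t ≤ y → t = ⊥) →
        (↑(φ z) : Set α) ∩ ↑(φ y) = ↑(φ ⊥) := by
      intro z y hzy
      obtain ⟨t, ht⟩ := hsurj _ (flat_inter (φ z).2 (φ y).2)
      have ht1 : t ≤ z := (hsubrel t z).mpr (ht ▸ Set.inter_subset_left)
      have ht2 : t ≤ y := (hsubrel t y).mpr (ht ▸ Set.inter_subset_right)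
      rw [← ht, hzy t ht1 ht2]
    set B := (↑(φ ⊥) : Set α) with hB_def
    set A1 := (↑(φ a₁) : Set α) with hA1_def
    set A2 := (↑(φ a₂) : Set α) with hA2_def
    set A3 := (↑(φ a₃) : Set α) with hA3_def
    set C := (↑(φ c) : Set α) with hC_def
    have hBf : IsCFlat V H B := (φ ⊥).2
    have hA1f : IsCFlat V H A1 := (φ a₁).2
    have hA2f : IsCFlat V H A2 := (φ a₂).2
    have hA3f : IsCFlat V H A3 := (φ a₃).2
    have hCf : IsCFlat V H C := (φ c).2
    have hBA1 : B ⊆ A1 := hbotsub a₁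
    have hBC : B ⊆ C := hbotsub c
    have hA1C : A1 ⊆ C := (hsubrel a₁ c).mp h1lec
    have hA2C : A2 ⊆ C := (hsubrel a₂ c).mp h2lec
    have h12B : A1 ∩ A2 = B := by
      refine hinter a₁ a₂ (fun t ht1 ht2 => ?_)
      rcases le_a1 _ ht1 with h | h
      · exact h
      rcases le_a2 _ ht2 with h' | h'
      · exact h'
      · exact absurd (h.symm.trans h') h12
    have h13B : A1 ∩ A3 = B := by
      refine hinter a₁ a₃ (fun t ht1 ht2 => ?_)
      rcases le_a1 _ ht1 with h | h
      · exact h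
      rcases le_a3 _ ht2 with h' | h'
      · exact h'
      · exact absurd (h.symm.trans h') h13
    have h23B : A2 ∩ A3 = B := by
      refine hinter a₂ a₃ (fun t ht1 ht2 => ?_)
      rcases le_a2 _ ht1 with h | h
      · exact h
      rcases le_a3 _ ht2 with h' | h'
      · exact h'
      · exact absurd (h.symm.trans h') h23
    have hc3B : C ∩ A3 = B := by
      refine hinter c a₃ (fun t ht1 ht2 => ?_)
      rcases le_a3 _ ht2 with h' | h'
      · exact h'
      rcases le_c _ ht1 with h | h | h | h
      · exact h
      · exact absurd (h.symm.trans h') h13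
      · exact absurd (h.symm.trans h') h23
      · exact absurd (h.symm.trans h') (Ne.symm h3c)
    -- points
    have hx1ex : ∃ x, x ∈ A1 ∧ x ∉ B := by
      obtain ⟨x, hx, hx'⟩ := Set.exists_of_ssubset
        (hBA1.ssubset_of_ne (fun h => hb1 (hEqL ⊥ a₁ h)))
      exact ⟨x, hx, hx'⟩
    have hx2ex : ∃ x, x ∈ A2 ∧ x ∉ B := by
      obtain ⟨x, hx, hx'⟩ := Set.exists_of_ssubset
        ((hbotsub a₂).ssubset_of_ne (fun h => hb2 (hEqL ⊥ a₂ h)))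
      exact ⟨x, hx, hx'⟩
    have hz1ex : ∃ x, x ∈ A3 ∧ x ∉ B := by
      obtain ⟨x, hx, hx'⟩ := Set.exists_of_ssubset
        ((hbotsub a₃).ssubset_of_ne (fun h => hb3 (hEqL ⊥ a₃ h)))
      exact ⟨x, hx, hx'⟩
    obtain ⟨x₁, hx₁A, hx₁B⟩ := hx1ex
    obtain ⟨x₂, hx₂A, hx₂B⟩ := hx2ex
    obtain ⟨z₁, hz₁A, hz₁B⟩ := hz1ex
    -- simple faces
    have hemp : (∅ : Set α) ∈ H := by
      obtain ⟨X, hX⟩ := hHne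
      exact hHdc X hX ∅ (Set.empty_subset X)
    have hsing : ∀ p, p ∈ V → p ∉ B → ({p} : Set α) ∈ H := by
      intro p hpV hpB
      have := hBf.2 ∅ hemp (Set.empty_subset B) p ⟨hpV, hpB⟩
      simpa using this
    -- separation facts from boolean representability
    have hnotB : ∀ I ∈ H, ∀ u ∈ I, u ∉ B := by
      intro I hI u huI huB
      obtain ⟨k, F, x, hF, hFmono, -, hIx, hx⟩ := hbr I hI
      rw [hIx] at huI
      obtain ⟨i, rfl⟩ := huI
      exact (hx i).2 (hBflatsub _ (hF i.castSucc) huB)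
    have hsep : ∀ I ∈ H, ∀ u ∈ I, ∀ v ∈ I, u ≠ v →
        ∃ G, IsCFlat V H G ∧ ((u ∈ G ∧ v ∉ G) ∨ (v ∈ G ∧ u ∉ G)) := by
      intro I hI u huI v hvI huv
      obtain ⟨k, F, x, hF, hFmono, -, hIx, hx⟩ := hbr I hI
      rw [hIx] at huI hvI
      obtain ⟨i, rfl⟩ := huI
      obtain ⟨j, rfl⟩ := hvI
      have hij : i ≠ j := fun h => huv (by rw [h])
      rcases hij.lt_or_gt with h | h
      · refine ⟨F j.castSucc, hF _, Or.inl ⟨?_, (hx j).2⟩⟩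
        have hh : i.succ ≤ j.castSucc := by
          simp only [Fin.le_def, Fin.val_succ, Fin.coe_castSucc]
          exact h
        exact hFmono.monotone hh (hx i).1
      · refine ⟨F i.castSucc, hF _, Or.inr ⟨?_, (hx i).2⟩⟩
        have hh : j.succ ≤ i.castSucc := by
          simp only [Fin.le_def, Fin.val_succ, Fin.coe_castSucc]
          exact h
        exact hFmono.monotone hh (hx j).1
    by_cases hrt : ∃ w ∈ V, w ∉ C ∧ w ∉ A3
    · -- there is a point outside C ∪ A3 : then B ∪ (V \ (C ∪ A3)) is a seventh flat
      obtain ⟨w, hwV, hwC, hw3⟩ := hrt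
      set S := B ∪ (V \ (C ∪ A3)) with hS_def
      have hwS : w ∈ S := Or.inr ⟨hwV, fun h => h.elim hwC hw3⟩
      have hSflat : IsCFlat V H S := by
        constructor
        · exact Set.union_subset hBf.1 Set.diff_subset
        · intro I hI hIS p hp
          obtain ⟨hpV, hpS⟩ := hp
          have hpB : p ∉ B := fun h => hpS (Or.inl h)
          have hpCA : p ∈ C ∨ p ∈ A3 := by
            by_contra h
            push_neg at h
            exact hpS (Or.inr ⟨hpV, fun hh => hh.elim h.1 h.2⟩)
          have hIrt : ∀ u ∈ I, u ∈ V \ (C ∪ A3) :=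
            fun u hu => (hIS hu).resolve_left (hnotB I hI u hu)
          have hIsing : ∀ u ∈ I, ∀ v ∈ I, u = v := by
            intro u hu v hv
            by_contra huv
            obtain ⟨G, hG, hcase⟩ := hsep I hI u hu v hv huv
            have key : ∀ a b : α, a ∈ V \ (C ∪ A3) → b ∈ I → a ∈ G → b ∉ G → False := by
              intro a b ha hb haG hbG
              rcases hsix G hG with rfl | rfl | rfl | rfl | rfl | rfl
              · exact ha.2 (Or.inl (hBC haG))
              · exact ha.2 (Or.inl (hA1C haG))
              · exact ha.2 (Or.inl (hA2C haG))
              · exact ha.2 (Or.inr haG)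
              · exact ha.2 (Or.inl haG)
              · exact hbG (hHsub I hI hb)
            rcases hcase with ⟨hu', hv'⟩ | ⟨hv', hu'⟩
            · exact key u v (hIrt u hu) hv hu' hv'
            · exact key v u (hIrt v hv) hu hv' hu'
          by_cases hIe : I = ∅
          · subst hIe
            simpa using hsing p hpV hpB
          · obtain ⟨w', hw'⟩ := Set.nonempty_iff_ne_empty.mpr hIe
            have hIw : I = {w'} :=
              Set.eq_singleton_iff_unique_mem.mpr ⟨hw', fun v hv => hIsing v hv w' hw'⟩
            have hw'V : w' ∈ V := hHsub I hI hw'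
            have hw'rt := hIrt w' hw'
            rw [hIw]
            have hins : ∀ q : α, insert p ({w'} : Set α) = insert w' {q} → False ∨ True := fun _ _ => Or.inr trivial
            rcases hpCA with hpC | hp3
            · have h1' : ({p} : Set α) ∈ H := hsing p hpV hpB
              have h2' := hCf.2 {p} h1' (Set.singleton_subset_iff.mpr hpC) w'
                ⟨hw'V, fun h => hw'rt.2 (Or.inl h)⟩
              have e : insert p ({w'} : Set α) = insert w' {p} := by
                ext t; simp [or_comm]
              rwa [e]
            · have h1' : ({p} : Set α) ∈ H := hsing p hpV hpB
              have h2' := hA3f.2 {p} h1' (Set.singleton_subset_iff.mpr hp3) w'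
                ⟨hw'V, fun h => hw'rt.2 (Or.inr h)⟩
              have e : insert p ({w'} : Set α) = insert w' {p} := by
                ext t; simp [or_comm]
              rwa [e]
      rcases hsix S hSflat with h | h | h | h | h | h
      · exact hwC (hBC (by rw [← h]; exact hwS))
      · exact hwC (hA1C (by rw [← h]; exact hwS))
      · exact hwC (hA2C (by rw [← h]; exact hwS))
      · exact hw3 (by rw [← h]; exact hwS)
      · exact hwC (by rw [← h]; exact hwS)
      · have hx₂S : x₂ ∈ S := by rw [h]; exact hA2f.1 hx₂A
        rcases hx₂S with h' | h'
        · exact hx₂B h'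
        · exact h'.2 (Or.inl (hA2C hx₂A))
    · -- V ⊆ C ∪ A3 : then A1 ∪ A3 is a seventh flat
      push_neg at hrt
      have hVCA : ∀ p ∈ V, p ∈ C ∨ p ∈ A3 := fun p hp => or_iff_not_imp_left.mpr (hrt p hp)
      set S := A1 ∪ A3 with hS_def
      have hSflat : IsCFlat V H S := by
        constructor
        · exact Set.union_subset hA1f.1 hA3f.1
        · intro I hI hIS p hp
          obtain ⟨hpV, hpS⟩ := hp
          have hp1 : p ∉ A1 := fun h => hpS (Or.inl h)
          have hp3 : p ∉ A3 := fun h => hpS (Or.inr h)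
          have hpC : p ∈ C := (hVCA p hpV).resolve_right hp3
          have hpB : p ∉ B := fun h => hp1 (hBA1 h)
          have hIV : I ⊆ V := hHsub I hI
          have hA1sing : ∀ u ∈ I, ∀ v ∈ I, u ∈ A1 → v ∈ A1 → u = v := by
            intro u hu v hv hu1 hv1
            by_contra huv
            obtain ⟨G, hG, hcase⟩ := hsep I hI u hu v hv huv
            have key : ∀ a b : α, a ∈ I → b ∈ I → a ∈ A1 → b ∈ A1 → a ∈ G → b ∉ G → False := by
              intro a b ha hb ha1 hb1 haG hbG
              rcases hsix G hG with rfl | rfl | rfl | rfl | rfl | rfl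
              · exact hnotB I hI a ha haG
              · exact hbG hb1
              · exact hnotB I hI a ha (h12B ▸ (⟨ha1, haG⟩ : a ∈ A1 ∩ A2))
              · exact hnotB I hI a ha (h13B ▸ (⟨ha1, haG⟩ : a ∈ A1 ∩ A3))
              · exact hbG (hA1C hb1)
              · exact hbG (hIV hb)
            rcases hcase with ⟨hu', hv'⟩ | ⟨hv', hu'⟩
            · exact key u v hu hv hu1 hv1 hu' hv'
            · exact key v u hv hu hv1 hu1 hv' hu'
          have hA3sing : ∀ u ∈ I, ∀ v ∈ I, u ∈ A3 → v ∈ A3 → u = v := by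
            intro u hu v hv hu1 hv1
            by_contra huv
            obtain ⟨G, hG, hcase⟩ := hsep I hI u hu v hv huv
            have key : ∀ a b : α, a ∈ I → b ∈ I → a ∈ A3 → b ∈ A3 → a ∈ G → b ∉ G → False := by
              intro a b ha hb ha1 hb1 haG hbG
              rcases hsix G hG with rfl | rfl | rfl | rfl | rfl | rfl
              · exact hnotB I hI a ha haG
              · exact hnotB I hI a ha (h13B ▸ (⟨haG, ha1⟩ : a ∈ A1 ∩ A3))
              · exact hnotB I hI a ha (h23B ▸ (⟨haG, ha1⟩ : a ∈ A2 ∩ A3))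
              · exact hbG hb1
              · exact hnotB I hI a ha (hc3B ▸ (⟨haG, ha1⟩ : a ∈ C ∩ A3))
              · exact hbG (hIV hb)
            rcases hcase with ⟨hu', hv'⟩ | ⟨hv', hu'⟩
            · exact key u v hu hv hu1 hv1 hu' hv'
            · exact key v u hv hu hv1 hu1 hv' hu'
          by_cases h1 : ∃ u ∈ I, u ∈ A1
          · by_cases h3 : ∃ v ∈ I, v ∈ A3
            · obtain ⟨u, huI, hu1⟩ := h1
              obtain ⟨v, hvI, hv3⟩ := h3
              have huv : u ≠ v := fun h =>
                hnotB I hI u huI (h13B ▸ (⟨hu1, h ▸ hv3⟩ : u ∈ A1 ∩ A3))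
              have hIuv : I = {u, v} := by
                apply Set.eq_of_subset_of_subset
                · intro t ht
                  rcases hIS ht with ht1 | ht3
                  · exact Or.inl (hA1sing t ht u huI ht1 hu1)
                  · exact Or.inr (hA3sing t ht v hvI ht3 hv3)
                · rintro t (rfl | rfl)
                  exacts [huI, hvI]
              have hu' : ({u} : Set α) ∈ H := hHdc I hI {u} (Set.singleton_subset_iff.mpr huI)
              have hupH : insert p {u} ∈ H :=
                hA1f.2 {u} hu' (Set.singleton_subset_iff.mpr hu1) p ⟨hpV, hp1⟩
              have hupC : insert p ({u} : Set α) ⊆ C := by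
                rintro t (rfl | rfl)
                · exact hpC
                · exact hA1C hu1
              have hvC : v ∉ C := fun h => hnotB I hI v hvI (hc3B ▸ (⟨h, hv3⟩ : v ∈ C ∩ A3))
              have hfin : insert v (insert p {u}) ∈ H :=
                hCf.2 _ hupH hupC v ⟨hIV hvI, hvC⟩
              have e : insert p I = insert v (insert p {u}) := by
                rw [hIuv]; ext t; simp; tauto
              rw [e]; exact hfin
            · obtain ⟨u, huI, hu1⟩ := h1
              have hIu : I = {u} := by
                apply Set.eq_of_subset_of_subset
                · intro t ht
                  rcases hIS ht with ht1 | ht3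
                  · exact hA1sing t ht u huI ht1 hu1
                  · exact absurd ⟨t, ht, ht3⟩ h3
                · rintro t rfl
                  exact huI
              rw [hIu] at hI ⊢
              exact hA1f.2 {u} hI (Set.singleton_subset_iff.mpr hu1) p ⟨hpV, hp1⟩
          · by_cases h3 : ∃ v ∈ I, v ∈ A3
            · obtain ⟨v, hvI, hv3⟩ := h3
              have hIv : I = {v} := by
                apply Set.eq_of_subset_of_subset
                · intro t ht
                  rcases hIS ht with ht1 | ht3
                  · exact absurd ⟨t, ht, ht1⟩ h1
                  · exact hA3sing t ht v hvI ht3 hv3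
                · rintro t rfl
                  exact hvI
              rw [hIv] at hI ⊢
              exact hA3f.2 {v} hI (Set.singleton_subset_iff.mpr hv3) p ⟨hpV, hp3⟩
            · have hIe : I = ∅ := Set.eq_empty_iff_forall_notMem.mpr
                (fun t ht => (hIS ht).elim (fun h => h1 ⟨t, ht, h⟩) (fun h => h3 ⟨t, ht, h⟩))
              rw [hIe]
              simpa using hsing p hpV hpB
      rcases hsix S hSflat with h | h | h | h | h | h
      · exact hx₁B (by rw [← h]; exact Or.inl hx₁A)
      · refine hz₁B (h13B ▸ (⟨?_, hz₁A⟩ : z₁ ∈ A1 ∩ A3))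
        rw [← h]; exact Or.inr hz₁A
      · refine hx₁B (h12B ▸ (⟨hx₁A, ?_⟩ : x₁ ∈ A1 ∩ A2))
        rw [← h]; exact Or.inl hx₁A
      · refine hx₁B (h13B ▸ (⟨hx₁A, ?_⟩ : x₁ ∈ A1 ∩ A3))
        rw [← h]; exact Or.inl hx₁A
      · refine hz₁B (hc3B ▸ (⟨?_, hz₁A⟩ : z₁ ∈ C ∩ A3))
        rw [← h]; exact Or.inr hz₁A
      · have hx₂S : x₂ ∈ S := by rw [h]; exact hA2f.1 hx₂A
        rcases hx₂S with h' | h'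
        · exact hx₂B (h12B ▸ (⟨h', hx₂A⟩ : x₂ ∈ A1 ∩ A2))
        · exact hx₂B (h23B ▸ (⟨hx₂A, h'⟩ : x₂ ∈ A2 ∩ A3))
end
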